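/- arXiv:2302.11668 — 10 statements merged into one kernel-verified Lean document; each statement's English description precedes it below -/
import Mathlib

section
/- Let G be a finite connected simple graph with minimum degree at least 2 that is not isomorphic to the 4-cycle C₄. Then the fractional domatic number of G is strictly greater than 2. -/
open SimpleGraph

/-- A set of vertices `D` is dominating in `G` if every vertex not in `D`
has a neighbour in `D`. -/
def Dominating {V : Type*} (G : SimpleGraph V) (D : Finset V) : Prop :=
  ∀ v : V, v ∉ D → ∃ u ∈ D, G.Adj v u

/-- A `(k,s)`-configuration of `G`: a multiset of `k` dominating sets of `G`
such that every vertex belongs to at most `s` of them. -/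
def IsConfig {V : Type*} [DecidableEq V] (G : SimpleGraph V)
    (𝒟 : Multiset (Finset V)) (k s : ℕ) : Prop :=
  Multiset.card 𝒟 = k ∧ (∀ D ∈ 𝒟, Dominating G D) ∧
    ∀ v : V, 𝒟.countP (fun D => v ∈ D) ≤ s

/-- The fractional domatic number of `G`: the supremum (attained as a maximum) of `k/s`
over all natural numbers `k`, `s ≥ 1` such that `G` admits a `(k,s)`-configuration. -/
noncomputable def fracDomatic {V : Type*} [DecidableEq V] (G : SimpleGraph V) : ℝ :=
  sSup {x : ℝ | ∃ k s : ℕ, 0 < s ∧ (∃ 𝒟 : Multiset (Finset V), IsConfig G 𝒟 k s) ∧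
    x = (k : ℝ) / (s : ℝ)}

/-!
For every vertex `v` we find four dominating sets covering every vertex at most twice and `v` at
most once; summing these over the `n` vertices gives a `(4n, 2n - 1)`-configuration, so
`FD(G) ≥ 4n / (2n - 1) > 2`.

The four sets come from maximal independent sets `B`: by minimum degree `2`, the complement of `B`
stays dominating after deleting a vertex `v` and adding a neighbour of `v`. This settles `v` unless
neither `v` nor some neighbour `x` of `v` is avoided by two disjoint dominating sets. Then every
maximal independent set missing `v` contains `N(v)`, which makes the vertices of `N(v)` pairwise
twins, and likewise for `x`; so `G` is complete bipartite with parts `N(x)` and `N(v)`. There,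
sets made of one vertex from each part suffice unless both parts have two vertices, i.e. `G = C₄`.
-/

section FractionalDomatic

variable {V : Type*} [DecidableEq V] {G : SimpleGraph V}

lemma Dominating.nonempty [Nonempty V] {D : Finset V} (hD : Dominating G D) : D.Nonempty := by
  obtain ⟨w⟩ := ‹Nonempty V›
  by_cases hw : w ∈ D
  · exact ⟨w, hw⟩
  · obtain ⟨u, hu, -⟩ := hD w hw
    exact ⟨u, hu⟩

lemma Multiset.card_le_sum_countP_mem [Fintype V] (𝒟 : Multiset (Finset V))
    (h : ∀ D ∈ 𝒟, D.Nonempty) : Multiset.card 𝒟 ≤ ∑ u, 𝒟.countP (u ∈ ·) := by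
  induction 𝒟 using Multiset.induction_on with
  | empty => simp
  | cons D 𝒟 ih =>
    have hD : 1 ≤ ∑ u, if u ∈ D then 1 else 0 := by
      simpa [Finset.sum_boole] using (h D (Multiset.mem_cons_self D 𝒟)).card_pos
    simp only [Multiset.card_cons, Multiset.countP_cons, Finset.sum_add_distrib]
    have := ih fun D' hD' => h D' (Multiset.mem_cons_of_mem hD')
    omega

lemma IsConfig.card_le [Fintype V] [Nonempty V] {𝒟 : Multiset (Finset V)} {k s : ℕ}
    (h : IsConfig G 𝒟 k s) : k ≤ Fintype.card V * s := by
  obtain ⟨rfl, hdom, hcount⟩ := h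
  calc Multiset.card 𝒟 ≤ ∑ u, 𝒟.countP (u ∈ ·) :=
        Multiset.card_le_sum_countP_mem 𝒟 fun D hD => (hdom D hD).nonempty
    _ ≤ ∑ _u : V, s := Finset.sum_le_sum fun u _ => hcount u
    _ = Fintype.card V * s := by simp

lemma div_le_fracDomatic [Fintype V] [Nonempty V] {𝒟 : Multiset (Finset V)} {k s : ℕ}
    (h : IsConfig G 𝒟 k s) (hs : 0 < s) : (k : ℝ) / s ≤ fracDomatic G := by
  refine le_csSup ⟨Fintype.card V, ?_⟩ ⟨k, s, hs, ⟨𝒟, h⟩, rfl⟩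
  rintro _ ⟨k', s', hs', ⟨𝒟', h'⟩, rfl⟩
  rw [div_le_iff₀ (by positivity)]
  exact_mod_cast h'.card_le

lemma div_lt_fracDomatic [Fintype V] [Nonempty V] {k s : ℕ} (hk : 0 < k)
    (h : ∀ v : V, ∃ 𝒟 : Multiset (Finset V), IsConfig G 𝒟 k s ∧ 𝒟.countP (v ∈ ·) < s) :
    (k : ℝ) / s < fracDomatic G := by
  choose 𝒟 h𝒟 hv using h
  set n := Fintype.card V
  have hn : 0 < n := Fintype.card_pos
  have hs : 0 < s := Nat.zero_lt_of_lt (hv (Classical.arbitrary V))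
  have hconf : IsConfig G (∑ v, 𝒟 v) (n * k) (n * s - 1) := by
    refine ⟨by simp [Multiset.card_sum, (h𝒟 _).1, n], fun D hD => ?_, fun u => ?_⟩
    · obtain ⟨v, -, hD⟩ := Multiset.mem_sum.mp hD
      exact (h𝒟 v).2.1 D hD
    · have : (∑ v, 𝒟 v).countP (u ∈ ·) < n * s := by
        rw [← Multiset.coe_countPAddMonoidHom, map_sum]
        calc ∑ v, (𝒟 v).countP (u ∈ ·) < ∑ _v : V, s :=
              Finset.sum_lt_sum (fun v _ => (h𝒟 v).2.2 u) ⟨u, Finset.mem_univ u, hv u⟩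
          _ = n * s := by simp [n]
      omega
  have hpos : 0 < n * s - 1 :=
    Nat.pos_of_ne_zero fun h0 => by simpa [h0, hn.ne', hk.ne'] using hconf.card_le
  refine lt_of_lt_of_le ?_ (div_le_fracDomatic hconf hpos)
  have hcast : ((n * s - 1 : ℕ) : ℝ) = n * s - 1 := by
    rw [Nat.cast_sub (by omega)]
    push_cast
    ring
  rw [hcast, Nat.cast_mul, div_lt_div_iff₀ (by positivity) (by rw [← hcast]; positivity)]
  have : (0 : ℝ) < k := by exact_mod_cast hk
  nlinarith

end FractionalDomatic

section Graph

variable {V : Type*} {G : SimpleGraph V}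

lemma exists_adj_ne {u : V} (hu : 2 ≤ (G.neighborSet u).ncard) (z : V) :
    ∃ w, G.Adj u w ∧ w ≠ z := by
  obtain ⟨a, ha, b, hb, hab⟩ := (Set.one_lt_ncard (Set.finite_of_ncard_pos (by omega))).mp hu
  by_cases haz : a = z
  · exact ⟨b, hb, fun hbz => hab (haz.trans hbz.symm)⟩
  · exact ⟨a, ha, haz⟩

lemma Dominating.of_maximal_isIndepSet [DecidableEq V] {B : Finset V}
    (hB : Maximal (fun B : Finset V => G.IsIndepSet (B : Set V)) B) : Dominating G B := by
  intro u hu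
  by_contra! hno
  have hind : G.IsIndepSet (insert u B : Finset V) := by
    rw [Finset.coe_insert]
    exact hB.prop.insert fun w hw _ => ⟨hno w hw, fun hwu => hno w hw hwu.symm⟩
  exact hu (hB.le_of_ge hind (Finset.subset_insert u B) (Finset.mem_insert_self u B))

lemma exists_isIndepSet_dominating_superset [Finite V] [DecidableEq V] {I : Finset V}
    (hI : G.IsIndepSet (I : Set V)) :
    ∃ B : Finset V, I ⊆ B ∧ G.IsIndepSet (B : Set V) ∧ Dominating G B := by
  obtain ⟨B, hIB, hB⟩ := Finite.exists_le_maximal (p := fun B : Finset V => G.IsIndepSet ↑B) hI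
  exact ⟨B, hIB, hB.prop, .of_maximal_isIndepSet hB⟩

lemma dominating_insert_erase_compl [Fintype V] [DecidableEq V]
    (hdeg : ∀ u : V, 2 ≤ (G.neighborSet u).ncard) {B : Finset V} (hB : G.IsIndepSet (B : Set V))
    {v x : V} (hvx : G.Adj v x) : Dominating G (insert x (Bᶜ.erase v)) := by
  intro u hu
  by_cases huv : u = v
  · exact ⟨x, Finset.mem_insert_self x _, huv ▸ hvx⟩
  have huB : u ∈ B := by
    by_contra huB
    exact hu (Finset.mem_insert_of_mem (Finset.mem_erase.2 ⟨huv, Finset.mem_compl.2 huB⟩))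
  obtain ⟨w, huw, hwv⟩ := exists_adj_ne (hdeg u) v
  have hwB : w ∉ B := fun hwB => hB huB hwB huw.ne huw
  exact ⟨w, Finset.mem_insert_of_mem (Finset.mem_erase.2 ⟨hwv, Finset.mem_compl.2 hwB⟩), huw⟩

def HasDisjointDominatingPairAvoiding (G : SimpleGraph V) (y : V) : Prop :=
  ∃ B C : Finset V, Dominating G B ∧ Dominating G C ∧ Disjoint B C ∧ y ∉ B ∧ y ∉ C

lemma hasDisjointDominatingPairAvoiding_of_isIndepSet [Fintype V] [DecidableEq V]
    (hdeg : ∀ u : V, 2 ≤ (G.neighborSet u).ncard) {B : Finset V} (hB : G.IsIndepSet (B : Set V))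
    (hBdom : Dominating G B) {y w : V} (hyB : y ∉ B) (hyw : G.Adj y w) (hwB : w ∉ B) :
    HasDisjointDominatingPairAvoiding G y := by
  refine ⟨B, insert w (Bᶜ.erase y), hBdom, dominating_insert_erase_compl hdeg hB hyw, ?_, hyB, ?_⟩
  · rw [Finset.disjoint_insert_right]
    exact ⟨hwB, Finset.disjoint_of_subset_right (Finset.erase_subset _ _) disjoint_compl_right⟩
  · simp [hyw.ne]

lemma countP_mem_four [DecidableEq V] (u : V) (A₁ A₂ A₃ A₄ : Finset V) :
    ({A₁, A₂, A₃, A₄} : Multiset (Finset V)).countP (u ∈ ·) =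
      (if u ∈ A₁ then 1 else 0) + (if u ∈ A₂ then 1 else 0) + (if u ∈ A₃ then 1 else 0) +
        (if u ∈ A₄ then 1 else 0) := by
  change Multiset.countP _ (A₁ ::ₘ A₂ ::ₘ A₃ ::ₘ A₄ ::ₘ 0) = _
  simp only [Multiset.countP_cons, Multiset.countP_zero]
  omega

lemma exists_config_of_pair [DecidableEq V] {A₁ A₂ : Finset V} {y v : V}
    (h₁ : Dominating G A₁) (h₂ : Dominating G A₂) (hA : ∀ u ∈ A₁, u ∈ A₂ → u = y)
    (hv₁ : v ∉ A₁) (hv₂ : v ∉ A₂) (hy : HasDisjointDominatingPairAvoiding G y) :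
    ∃ 𝒟 : Multiset (Finset V), IsConfig G 𝒟 4 2 ∧ 𝒟.countP (v ∈ ·) < 2 := by
  obtain ⟨B, C, hB, hC, hBC, hyB, hyC⟩ := hy
  have hBC' : ∀ u ∈ B, u ∉ C := fun _ hu => Finset.disjoint_left.1 hBC hu
  refine ⟨{A₁, A₂, B, C}, ⟨rfl, ?_, fun u => ?_⟩, ?_⟩
  · simp only [Multiset.insert_eq_cons, Multiset.forall_mem_cons, Multiset.mem_singleton, forall_eq]
    exact ⟨h₁, h₂, hB, hC⟩
  all_goals
    rw [countP_mem_four]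
    grind

lemma exists_config_of_adj [Fintype V] [DecidableEq V]
    (hdeg : ∀ u : V, 2 ≤ (G.neighborSet u).ncard) {v x : V} (hvx : G.Adj v x)
    (hx : HasDisjointDominatingPairAvoiding G x) :
    ∃ 𝒟 : Multiset (Finset V), IsConfig G 𝒟 4 2 ∧ 𝒟.countP (v ∈ ·) < 2 := by
  obtain ⟨B, hsub, hB, hBdom⟩ :=
    exists_isIndepSet_dominating_superset (G := G) (I := {x}) (by simp)
  have hxB : x ∈ B := hsub (Finset.mem_singleton_self x)
  have hvB : v ∉ B := fun hvB => hB hvB hxB hvx.ne hvx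
  refine exists_config_of_pair hBdom (dominating_insert_erase_compl hdeg hB hvx) (fun u huB hu => ?_)
    hvB (by simp [hvx.ne]) hx
  simp only [Finset.mem_insert, Finset.mem_erase, Finset.mem_compl] at hu
  tauto

lemma not_adj_of_not_hasDisjointDominatingPairAvoiding [Fintype V] [DecidableEq V]
    (hdeg : ∀ u : V, 2 ≤ (G.neighborSet u).ncard) {c p q : V}
    (hc : ¬ HasDisjointDominatingPairAvoiding G c) (hcp : G.Adj c p) (hcq : G.Adj c q)
    {I : Finset V} (hI : G.IsIndepSet (I : Set V)) (hpI : p ∈ I) {a : V} (ha : a ∈ I) :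
    ¬ G.Adj a q := by
  obtain ⟨B, hIB, hB, hBdom⟩ := exists_isIndepSet_dominating_superset hI
  have hcB : c ∉ B := fun hcB => hB hcB (hIB hpI) hcp.ne hcp
  have hqB : q ∈ B := by
    by_contra hqB
    exact hc (hasDisjointDominatingPairAvoiding_of_isIndepSet hdeg hB hBdom hcB hcq hqB)
  exact fun haq => hB (hIB ha) hqB haq.ne haq

lemma adj_iff_adj_of_not_hasDisjointDominatingPairAvoiding [Fintype V] [DecidableEq V]
    (hdeg : ∀ u : V, 2 ≤ (G.neighborSet u).ncard) {c : V}
    (hc : ¬ HasDisjointDominatingPairAvoiding G c) {p q : V} (hcp : G.Adj c p) (hcq : G.Adj c q)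
    (z : V) : G.Adj p z ↔ G.Adj q z := by
  suffices key : ∀ {p q : V}, G.Adj c p → G.Adj c q → G.Adj q z → G.Adj p z from
    ⟨key hcq hcp, key hcp hcq⟩
  intro p q hcp hcq hqz
  have hpq : ¬ G.Adj p q := not_adj_of_not_hasDisjointDominatingPairAvoiding hdeg hc hcp hcq
    (I := {p}) (by simp) (Finset.mem_singleton_self p) (Finset.mem_singleton_self p)
  by_contra hpz
  have hI : G.IsIndepSet (({p, z} : Finset V) : Set V) := by
    rw [Finset.coe_pair, SimpleGraph.IsIndepSet, Set.pairwise_pair]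
    exact fun _ => ⟨hpz, fun hzp => hpz hzp.symm⟩
  exact not_adj_of_not_hasDisjointDominatingPairAvoiding hdeg hc hcp hcq hI
    (by simp) (by simp) hqz.symm

/-- `G` is complete bipartite with parts `N(x)` and `N(v)`. -/
lemma adj_iff_of_not_hasDisjointDominatingPairAvoiding [Fintype V] [DecidableEq V]
    (hconn : G.Connected) (hdeg : ∀ u : V, 2 ≤ (G.neighborSet u).ncard) {v x : V}
    (hvx : G.Adj v x) (hv : ¬ HasDisjointDominatingPairAvoiding G v)
    (hx : ¬ HasDisjointDominatingPairAvoiding G x) (a b : V) :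
    G.Adj a b ↔ (G.Adj x a ↔ ¬ G.Adj x b) := by
  have twin_x : ∀ {a}, G.Adj x a → ∀ z, G.Adj a z ↔ G.Adj v z := fun ha =>
    adj_iff_adj_of_not_hasDisjointDominatingPairAvoiding hdeg hx ha hvx.symm
  have twin_v : ∀ {a}, G.Adj v a → ∀ z, G.Adj a z ↔ G.Adj x z := fun ha =>
    adj_iff_adj_of_not_hasDisjointDominatingPairAvoiding hdeg hv ha hvx
  have hcover : ∀ a, G.Adj x a ∨ G.Adj v a := by
    intro a
    induction (reachable_iff_reflTransGen v a).1 (hconn v a) with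
    | refl => exact Or.inl hvx.symm
    | tail _ hbc ih =>
      rcases ih with h | h
      · exact Or.inr ((twin_x h _).1 hbc)
      · exact Or.inl ((twin_v h _).1 hbc)
  have hside : ∀ a, G.Adj x a ↔ ¬ G.Adj v a := fun a =>
    ⟨fun hxa hva => G.loopless.irrefl a ((twin_x hxa a).2 hva), (hcover a).resolve_right⟩
  by_cases hxa : G.Adj x a
  · rw [twin_x hxa b, hside b]
    tauto
  · rw [twin_v ((hcover a).resolve_left hxa) b]
    tauto

lemma nonempty_iso_cycleGraph_four (S : Set V) (hG : ∀ a b, G.Adj a b ↔ (a ∈ S ↔ b ∉ S))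
    {a b c d : V} (ha : a ∈ S) (hb : b ∉ S) (hc : c ∈ S) (hd : d ∉ S) (hac : a ≠ c) (hbd : b ≠ d)
    (hcover : ∀ u, u = a ∨ u = b ∨ u = c ∨ u = d) : Nonempty (G ≃g cycleGraph 4) := by
  have hab : a ≠ b := by rintro rfl; exact hb ha
  have had : a ≠ d := by rintro rfl; exact hd ha
  have hcb : c ≠ b := by rintro rfl; exact hb hc
  have hcd : c ≠ d := by rintro rfl; exact hd hc
  let f : Fin 4 → V := ![a, b, c, d]
  have hf : f.Bijective := by
    refine ⟨fun i j hij => ?_, fun u => ?_⟩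
    · fin_cases i <;> fin_cases j <;> simp_all [f, eq_comm]
    · rcases hcover u with rfl | rfl | rfl | rfl
      exacts [⟨0, rfl⟩, ⟨1, rfl⟩, ⟨2, rfl⟩, ⟨3, rfl⟩]
  refine ⟨(⟨Equiv.ofBijective f hf, fun {i j} => ?_⟩ : cycleGraph 4 ≃g G).symm⟩
  rw [Equiv.ofBijective_apply, Equiv.ofBijective_apply, hG]
  fin_cases i <;> fin_cases j <;> simp [f, ha, hb, hc, hd, cycleGraph_adj] <;> decide

lemma exists_config_of_completeBipartite [Fintype V] [DecidableEq V] (S : Set V)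
    (hG : ∀ a b, G.Adj a b ↔ (a ∈ S ↔ b ∉ S)) (hdeg : ∀ u : V, 2 ≤ (G.neighborSet u).ncard)
    (hC4 : ¬ Nonempty (G ≃g cycleGraph 4)) {v : V} (hv : v ∈ S) :
    ∃ 𝒟 : Multiset (Finset V), IsConfig G 𝒟 4 2 ∧ 𝒟.countP (v ∈ ·) < 2 := by
  classical
  have hpair : ∀ {a b}, a ∈ S → b ∉ S → Dominating G {a, b} := by
    intro a b ha hb u _
    by_cases huS : u ∈ S
    · exact ⟨b, by simp, (hG u b).2 (by tauto)⟩
    · exact ⟨a, by simp, (hG u a).2 (by tauto)⟩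
  obtain ⟨t₁, hvt₁, -⟩ := exists_adj_ne (hdeg v) v
  obtain ⟨t₂, hvt₂, ht₂⟩ := exists_adj_ne (hdeg v) t₁
  obtain ⟨s, ht₁s, hsv⟩ := exists_adj_ne (hdeg t₁) v
  have ht₁S : t₁ ∉ S := by have := (hG v t₁).1 hvt₁; tauto
  have ht₂S : t₂ ∉ S := by have := (hG v t₂).1 hvt₂; tauto
  have hsS : s ∈ S := by have := (hG t₁ s).1 ht₁s; tauto
  by_cases hS : ∃ s' ∈ S, s' ≠ v ∧ s' ≠ s
  · obtain ⟨s', hs'S, hs'v, hs's⟩ := hS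
    refine ⟨{{s, t₁}, {s', t₂}, {s, t₂}, {s', t₁}}, ⟨rfl, ?_, fun u => ?_⟩, ?_⟩
    · simp only [Multiset.insert_eq_cons, Multiset.forall_mem_cons, Multiset.mem_singleton, forall_eq]
      exact ⟨hpair hsS ht₁S, hpair hs'S ht₂S, hpair hsS ht₂S, hpair hs'S ht₁S⟩
    all_goals
      rw [countP_mem_four]
      simp only [Finset.mem_insert, Finset.mem_singleton]
      grind
  by_cases hT : ∃ t₃ ∉ S, t₃ ≠ t₁ ∧ t₃ ≠ t₂
  · obtain ⟨t₃, ht₃S, ht₃₁, ht₃₂⟩ := hT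
    have hTdom : Dominating G S.toFinsetᶜ := fun u hu =>
      ⟨t₁, by simpa using ht₁S, (hG u t₁).2 (by simp at hu; tauto)⟩
    refine ⟨{{s, t₁}, {s, t₂}, {v, t₃}, S.toFinsetᶜ}, ⟨rfl, ?_, fun u => ?_⟩, ?_⟩
    · simp only [Multiset.insert_eq_cons, Multiset.forall_mem_cons, Multiset.mem_singleton, forall_eq]
      exact ⟨hpair hsS ht₁S, hpair hsS ht₂S, hpair hv ht₃S, hTdom⟩
    all_goals
      rw [countP_mem_four]
      simp only [Finset.mem_insert, Finset.mem_singleton, Finset.mem_compl, Set.mem_toFinset]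
      grind
  push Not at hS hT
  refine (hC4 (nonempty_iso_cycleGraph_four S hG hv ht₁S hsS ht₂S hsv.symm ht₂.symm fun u => ?_)).elim
  by_cases huS : u ∈ S
  · have := hS u huS
    tauto
  · have := hT u huS
    tauto

lemma exists_config_four_two [Fintype V] [DecidableEq V] (hconn : G.Connected)
    (hdeg : ∀ u : V, 2 ≤ (G.neighborSet u).ncard) (hC4 : ¬ Nonempty (G ≃g cycleGraph 4)) (v : V) :
    ∃ 𝒟 : Multiset (Finset V), IsConfig G 𝒟 4 2 ∧ 𝒟.countP (v ∈ ·) < 2 := by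
  by_cases hv : HasDisjointDominatingPairAvoiding G v
  · have ⟨B, C, hB, hC, hBC, hvB, hvC⟩ := hv
    exact exists_config_of_pair hB hC (fun u huB huC => (Finset.disjoint_left.1 hBC huB huC).elim)
      hvB hvC hv
  obtain ⟨x, hvx, -⟩ := exists_adj_ne (hdeg v) v
  by_cases hx : HasDisjointDominatingPairAvoiding G x
  · exact exists_config_of_adj hdeg hvx hx
  exact exists_config_of_completeBipartite {a | G.Adj x a}
    (adj_iff_of_not_hasDisjointDominatingPairAvoiding hconn hdeg hvx hv hx) hdeg hC4 hvx.symm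

end Graph

/-- A finite connected graph with minimum degree at least 2 that is not isomorphic to
the 4-cycle has fractional domatic number strictly greater than 2. -/
theorem stmt_1 {V : Type*} [Fintype V] [DecidableEq V] (G : SimpleGraph V)
    (hconn : G.Connected) (hdeg : ∀ v : V, 2 ≤ (G.neighborSet v).ncard)
    (hC4 : ¬ Nonempty (G ≃g cycleGraph 4)) :
    2 < fracDomatic G := by
  have : Nonempty V := hconn.nonempty
  have h := div_lt_fracDomatic (k := 4) (by norm_num) (exists_config_four_two hconn hdeg hC4)
  norm_num at h
  exact h
end

section
/- For every natural number n ≥ 3, the fractional domatic number of the n-cycle Cₙ equals 3 if n ≡ 0 (mod 3), equals 3n/(n+2) if n ≡ 1 (mod 3), and equals 3n/(n+1) if n ≡ 2 (mod 3). -/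
open SimpleGraph

/-!
A vertex of `Cₙ` dominates itself and its two neighbours, so every dominating set has at least
`⌈n/3⌉` elements, and double counting the incidences of a `(k,s)`-configuration gives
`k ⌈n/3⌉ ≤ n s`. Conversely, the `n` rotations of `{v | v ≡ 0 mod 3}` form an
`(n, ⌈n/3⌉)`-configuration, since every vertex lies in exactly as many rotations of a set as the set
has elements. Hence `FD(Cₙ) = n / ⌈n/3⌉`, which splits into the three cases according to `n mod 3`.
-/

open Finset
open scoped Pointwise

section Dominating

variable {V : Type*} [Fintype V] [DecidableEq V] {G : SimpleGraph V}

theorem Dominating.card_le_mul_card [DecidableRel G.Adj] {D : Finset V}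
    (hD : Dominating G D) : Fintype.card V ≤ (G.maxDegree + 1) * #D := by
  have hcover : (univ : Finset V) ⊆ D.biUnion fun u => insert u (G.neighborFinset u) := by
    intro v _
    by_cases hv : v ∈ D
    · exact mem_biUnion.2 ⟨v, hv, mem_insert_self v _⟩
    · obtain ⟨u, hu, hvu⟩ := hD v hv
      exact mem_biUnion.2 ⟨u, hu, mem_insert_of_mem ((G.mem_neighborFinset u v).2 hvu.symm)⟩
  calc Fintype.card V ≤ ∑ u ∈ D, #(insert u (G.neighborFinset u)) :=
        (card_le_card hcover).trans card_biUnion_le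
    _ ≤ ∑ _u ∈ D, (G.maxDegree + 1) := sum_le_sum fun u _ =>
        (card_insert_le _ _).trans (by simpa using G.degree_le_maxDegree u)
    _ = (G.maxDegree + 1) * #D := by rw [sum_const, smul_eq_mul, mul_comm]

theorem Multiset.sum_map_card_eq_sum_countP (𝒟 : Multiset (Finset V)) :
    (𝒟.map Finset.card).sum = ∑ v, 𝒟.countP (v ∈ ·) := by
  induction 𝒟 using Multiset.induction with
  | empty => simp
  | cons D 𝒟 ih =>
    simp only [Multiset.map_cons, Multiset.sum_cons, Multiset.countP_cons, ih, sum_add_distrib,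
      sum_boole, Nat.cast_id, filter_mem_eq_inter, univ_inter, add_comm]

theorem IsConfig.mul_le {𝒟 : Multiset (Finset V)} {k s m : ℕ} (hc : IsConfig G 𝒟 k s)
    (hm : ∀ D, Dominating G D → m ≤ #D) : k * m ≤ Fintype.card V * s := by
  obtain ⟨rfl, hdom, hcount⟩ := hc
  calc Multiset.card 𝒟 * m ≤ (𝒟.map card).sum := by
        simpa using Multiset.card_nsmul_le_sum (s := 𝒟.map card) (a := m)
          (by simpa using fun D hD => hm D (hdom D hD))
    _ = ∑ v, 𝒟.countP (v ∈ ·) := Multiset.sum_map_card_eq_sum_countP 𝒟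
    _ ≤ ∑ _v : V, s := sum_le_sum fun v _ => hcount v
    _ = Fintype.card V * s := by simp

theorem fracDomatic_eq_of_isConfig {𝒟 : Multiset (Finset V)} {m : ℕ}
    (hc : IsConfig G 𝒟 (Fintype.card V) m) (hm0 : 0 < m) (hm : ∀ D, Dominating G D → m ≤ #D) :
    fracDomatic G = Fintype.card V / m := by
  have hmem : (Fintype.card V / m : ℝ) ∈ {x : ℝ | ∃ k s : ℕ, 0 < s ∧
      (∃ 𝒟 : Multiset (Finset V), IsConfig G 𝒟 k s) ∧ x = (k : ℝ) / (s : ℝ)} :=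
    ⟨_, m, hm0, ⟨𝒟, hc⟩, rfl⟩
  refine IsGreatest.csSup_eq ⟨hmem, ?_⟩
  rintro x ⟨k, s, hs, ⟨𝒟', hc'⟩, rfl⟩
  rw [div_le_div_iff₀ (by positivity) (by positivity)]
  exact_mod_cast hc'.mul_le hm

end Dominating

section Translates

variable {α : Type*} [AddCommGroup α] [DecidableEq α]

theorem mem_vadd_finset_iff_sub_mem {D : Finset α} {c v : α} : v ∈ c +ᵥ D ↔ v - c ∈ D := by
  rw [← neg_neg c, mem_neg_vadd_finset_iff, vadd_eq_add, sub_neg_eq_add, add_comm]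

theorem Dominating.vadd {s : Set α} {D : Finset α} (hD : Dominating (circulantGraph s) D) (c : α) :
    Dominating (circulantGraph s) (c +ᵥ D) := by
  intro v hv
  obtain ⟨u, hu, hvu⟩ := hD (v - c) (mt mem_vadd_finset_iff_sub_mem.2 hv)
  refine ⟨u + c, mem_vadd_finset_iff_sub_mem.2 (by simpa using hu), ?_⟩
  simpa using circulantGraph_adj_translate (d := c) |>.2 hvu

variable [Fintype α]

def translates (D : Finset α) : Multiset (Finset α) :=
  univ.val.map fun c : α => c +ᵥ D

theorem countP_mem_translates (D : Finset α) (v : α) : (translates D).countP (v ∈ ·) = #D := by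
  rw [translates, Multiset.countP_map, ← filter_val, card_val]
  refine card_nbij' (v - ·) (v - ·) ?_ ?_ ?_ ?_ <;>
    simp [Set.MapsTo, Set.LeftInvOn, mem_vadd_finset_iff_sub_mem]

theorem isConfig_translates {s : Set α} {D : Finset α} (hD : Dominating (circulantGraph s) D) :
    IsConfig (circulantGraph s) (translates D) (Fintype.card α) #D :=
  ⟨by simp [translates], by simpa [translates] using hD.vadd, fun v => (countP_mem_translates D v).le⟩

end Translates

theorem card_filter_val_mod_three_eq_zero (n : ℕ) :
    #{v : Fin n | v.val % 3 = 0} = (n + 2) / 3 := by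
  have hcount := Nat.count_modEq_card n three_pos 0
  rw [Nat.count_eq_card_filter_range, ← Nat.Iio_eq_range, ← Fin.map_valEmbedding_univ, filter_map,
    card_map] at hcount
  refine hcount.trans ?_
  split_ifs <;> omega

theorem dominating_filter_val_mod_three_eq_zero (m : ℕ) :
    Dominating (cycleGraph (m + 3)) {v | v.val % 3 = 0} := by
  intro v hv
  simp only [mem_filter, mem_univ, true_and] at hv
  rcases (by omega : v.val % 3 = 1 ∨ v.val % 3 = 2) with h | h
  · refine ⟨v - 1, ?_, cycleGraph_adj.2 (Or.inl (sub_sub_cancel v 1))⟩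
    have hv0 : v ≠ 0 := fun hv0 => by simp [hv0] at h
    simp only [mem_filter, mem_univ, true_and, Fin.coe_sub_one, if_neg hv0]
    omega
  · refine ⟨v + 1, ?_, cycleGraph_adj.2 (Or.inr (add_sub_cancel_left v 1))⟩
    simp only [mem_filter, mem_univ, true_and, Fin.val_add_one]
    split_ifs with hlast
    · rfl
    · have := Fin.val_lt_last hlast
      omega

theorem Dominating.le_three_mul_card {m : ℕ} {D : Finset (Fin (m + 3))}
    (hD : Dominating (cycleGraph (m + 3)) D) : m + 3 ≤ 3 * #D := by
  have hdeg : (cycleGraph (m + 3)).maxDegree ≤ 2 :=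
    maxDegree_le_of_forall_degree_le _ _ fun _ => cycleGraph_degree_three_le.le
  calc m + 3 = Fintype.card (Fin (m + 3)) := (Fintype.card_fin _).symm
    _ ≤ ((cycleGraph (m + 3)).maxDegree + 1) * #D := hD.card_le_mul_card
    _ ≤ 3 * #D := Nat.mul_le_mul_right _ (by omega)

-- `(n + 2) / 3 = ⌈n / 3⌉`
theorem fracDomatic_cycleGraph {n : ℕ} (hn : 3 ≤ n) :
    fracDomatic (cycleGraph n) = n / ((n + 2) / 3 : ℕ) := by
  obtain ⟨m, rfl⟩ := Nat.exists_eq_add_of_le' hn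
  have hcirc : cycleGraph (m + 3) = circulantGraph {1} := cycleGraph_eq_circulantGraph (m + 2)
  have hconfig := isConfig_translates (hcirc ▸ dominating_filter_val_mod_three_eq_zero m)
  rw [card_filter_val_mod_three_eq_zero, ← hcirc] at hconfig
  rw [fracDomatic_eq_of_isConfig hconfig (by omega) (fun D hD => ?_), Fintype.card_fin]
  have := hD.le_three_mul_card
  omega

/-- The fractional domatic number of the cycle `Cₙ`, `n ≥ 3`: it equals `3` if
`n ≡ 0 (mod 3)`, equals `3n/(n+2)` if `n ≡ 1 (mod 3)`, and equals `3n/(n+1)` if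
`n ≡ 2 (mod 3)`. -/
theorem stmt_4 (n : ℕ) (hn : 3 ≤ n) :
    (n % 3 = 0 → fracDomatic (cycleGraph n) = 3) ∧
    (n % 3 = 1 → fracDomatic (cycleGraph n) = 3 * (n : ℝ) / ((n : ℝ) + 2)) ∧
    (n % 3 = 2 → fracDomatic (cycleGraph n) = 3 * (n : ℝ) / ((n : ℝ) + 1)) := by
  rw [fracDomatic_cycleGraph hn]
  set q := (n + 2) / 3 with hq
  have hq0 : (q : ℝ) ≠ 0 := by exact_mod_cast (by omega : q ≠ 0)
  refine ⟨fun h => ?_, fun h => ?_, fun h => ?_⟩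
  · rw [show (n : ℝ) = 3 * q by exact_mod_cast (by omega : n = 3 * q),
      mul_div_cancel_right₀ _ hq0]
  · rw [show (n : ℝ) + 2 = 3 * q by exact_mod_cast (by omega : n + 2 = 3 * q),
      mul_div_mul_left _ _ three_ne_zero]
  · rw [show (n : ℝ) + 1 = 3 * q by exact_mod_cast (by omega : n + 1 = 3 * q),
      mul_div_mul_left _ _ three_ne_zero]
end

section
/- Let G be a finite connected simple graph with minimum degree at least 2. Then either G is 2-connected, or G is an (H₁,H₂)-dumbbell for some connected graphs H₁ and H₂ each of minimum degree at least 2. -/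
open SimpleGraph

/-- `G` is 2-connected: connected, at least 3 vertices, and no cut vertex,
i.e. deleting any vertex leaves the graph connected. -/
def TwoConnected {V : Type*} [Fintype V] (G : SimpleGraph V) : Prop :=
  G.Connected ∧ 3 ≤ Fintype.card V ∧ ∀ v : V, (G.induce {u | u ≠ v}).Connected

/-- `G` is an `(H₁,H₂)`-dumbbell with plates the subgraphs `H₁` and `H₂`:
the plates have at most one vertex in common, and `G` is the union of `H₁`, `H₂` and
a path `P` (the handle, with at least one vertex) that is binary in `G` (all its
internal vertices have degree 2 in `G`), where each plate meets `P` in exactly one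
vertex, which is an end-vertex of `P`, and the plates are vertex disjoint whenever
`P` has at least two vertices. -/
def IsDumbbell {V : Type*} (G : SimpleGraph V) (H₁ H₂ : G.Subgraph) : Prop :=
  (H₁.verts ∩ H₂.verts).Subsingleton ∧
  ∃ (x y : V) (P : G.Walk x y),
    P.IsPath ∧
    (∀ v ∈ P.support, v ≠ x → v ≠ y → (G.neighborSet v).ncard = 2) ∧
    H₁ ⊔ H₂ ⊔ P.toSubgraph = ⊤ ∧
    H₁.verts ∩ {v | v ∈ P.support} = {x} ∧
    H₂.verts ∩ {v | v ∈ P.support} = {y} ∧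
    (x ≠ y → Disjoint H₁.verts H₂.verts)

/-!
If `G` has a cut vertex `v`, split `G - v` into a component `A` and the rest `B`. On each side,
walk from `v` into the side as long as the current vertex has a single neighbour among the
vertices of the side not yet visited. As every vertex of the side has degree at least 2, the walk
stops at a vertex with two such neighbours, and the unvisited vertices together with it form a
connected plate of minimum degree 2. The two walks glued at `v` form the handle. Its internal
vertices lie in neither plate, so all their edges are handle edges and they have degree 2.
-/

lemma Disjoint.eq_of_mem_insert {α : Type*} {A B : Set α} {u v : α} (hAB : Disjoint A B)
    (hA : u ∈ insert v A) (hB : u ∈ insert v B) : u = v := by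
  have hu : u ∈ insert v A ∩ insert v B := ⟨hA, hB⟩
  rwa [← Set.insert_inter_distrib, hAB.inter_eq, insert_empty_eq] at hu

namespace SimpleGraph

variable {V : Type*} {G : SimpleGraph V}

lemma Walk.IsPath.ncard_neighborSet_toSubgraph_eq_two {u v w : V} {p : G.Walk u v}
    (hp : p.IsPath) (hw : w ∈ p.support) (hwu : w ≠ u) (hwv : w ≠ v) :
    (p.toSubgraph.neighborSet w).ncard = 2 := by
  obtain ⟨n, rfl, hn⟩ := Walk.mem_support_iff_exists_getVert.mp hw
  refine hp.ncard_neighborSet_toSubgraph_internal_eq_two (fun h => hwu ?_) ?_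
  · rw [h, Walk.getVert_zero]
  · exact hn.lt_of_ne fun h => hwv (by rw [h, Walk.getVert_length])

lemma Walk.IsPath.reverse_append {u v w : V} {p : G.Walk v u} {q : G.Walk v w}
    (hp : p.IsPath) (hq : q.IsPath) (h : ∀ x ∈ p.support, x ∈ q.support → x = v) :
    (p.reverse.append q).IsPath := by
  have hq' := hq.support_nodup
  rw [← q.cons_tail_support, List.nodup_cons] at hq'
  rw [Walk.isPath_def, Walk.support_append, Walk.support_reverse]
  refine (List.nodup_reverse.mpr hp.support_nodup).append hq'.2 fun x hxp hxq => ?_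
  obtain rfl := h x (List.mem_reverse.mp hxp) (List.mem_of_mem_tail hxq)
  exact hq'.1 hxq

lemma Subgraph.neighborSet_induce_top {S : Set V} {v : V} (hv : v ∈ S) :
    ((⊤ : G.Subgraph).induce S).neighborSet v = G.neighborSet v ∩ S := by
  ext w
  simp [hv, and_comm]

lemma ncard_neighborSet_eq_two_of_sup_eq_top {H₁ H₂ : G.Subgraph} {x y u : V} {P : G.Walk x y}
    (hP : P.IsPath) (htop : H₁ ⊔ H₂ ⊔ P.toSubgraph = ⊤) (hu : u ∈ P.support)
    (hux : u ≠ x) (huy : u ≠ y) (hu₁ : u ∉ H₁.verts) (hu₂ : u ∉ H₂.verts) :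
    (G.neighborSet u).ncard = 2 := by
  suffices G.neighborSet u = P.toSubgraph.neighborSet u by
    rw [this]
    exact hP.ncard_neighborSet_toSubgraph_eq_two hu hux huy
  refine Set.Subset.antisymm (fun w huw => ?_) fun w => P.toSubgraph.adj_sub
  have : (H₁ ⊔ H₂ ⊔ P.toSubgraph).Adj u w := by rw [htop]; exact huw
  rcases this with (h | h) | h
  · exact absurd h.fst_mem hu₁
  · exact absurd h.fst_mem hu₂
  · exact h

lemma three_le_card_of_two_le_ncard_neighborSet [Fintype V] [Nonempty V]
    (hdeg : ∀ v, 2 ≤ (G.neighborSet v).ncard) : 3 ≤ Fintype.card V := by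
  obtain ⟨v⟩ := ‹Nonempty V›
  calc 3 ≤ (insert v (G.neighborSet v)).ncard := by
        rw [Set.ncard_insert_of_notMem G.notMem_neighborSet_self]
        linarith [hdeg v]
    _ ≤ Fintype.card V := Nat.card_eq_fintype_card (α := V) ▸ Set.ncard_le_card _

section Side

variable {c : V} {B : Set V}

lemma reachable_induce_insert_of_walk (hB : ∀ b ∈ B, G.neighborSet b ⊆ insert c B) :
    ∀ {a u : V} (_ : G.Walk a u) (ha : a ∈ B), u ∉ B →
      (G.induce (insert c B)).Reachable ⟨a, .inr ha⟩ ⟨c, .inl rfl⟩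
  | _, _, .nil, ha, hu => absurd ha hu
  | a, _, .cons (v := a') h p, ha, hu => by
    have hadj : (G.induce (insert c B)).Adj ⟨a, .inr ha⟩ ⟨a', hB a ha h⟩ := h
    rcases hB a ha h with rfl | ha'
    · exact hadj.reachable
    · exact hadj.reachable.trans (reachable_induce_insert_of_walk hB p ha' hu)

lemma connected_induce_insert (hG : G.Connected) (hc : c ∉ B)
    (hB : ∀ b ∈ B, G.neighborSet b ⊆ insert c B) : (G.induce (insert c B)).Connected := by
  refine (connected_iff_exists_forall_reachable _).mpr ⟨⟨c, .inl rfl⟩, ?_⟩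
  rintro ⟨u, rfl | hu⟩
  · rfl
  · exact (reachable_induce_insert_of_walk hB (hG u c).some hu hc).symm

lemma exists_adj_of_connected_induce_insert (h : (G.induce (insert c B)).Connected) (hc : c ∉ B)
    (hB : B.Nonempty) : ∃ b ∈ B, G.Adj c b := by
  obtain ⟨b, hb⟩ := hB
  obtain ⟨p⟩ := h.preconnected ⟨c, .inl rfl⟩ ⟨b, .inr hb⟩
  have hadj : G.Adj c p.snd :=
    p.adj_snd (p.not_nil_of_ne fun h' => by obtain rfl := Subtype.mk.inj h'; exact hc hb)
  exact ⟨p.snd, p.snd.2.resolve_left hadj.ne', hadj⟩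

/-- Half of a dumbbell: a plate `S` with a handle `P` from `c`, covering `insert c B` and every
edge at `B`. -/
structure IsLollipop (G : SimpleGraph V) (c : V) (B : Set V) {y : V} (P : G.Walk c y)
    (S : Set V) : Prop where
  isPath : P.IsPath
  union_eq : S ∪ {v | v ∈ P.support} = insert c B
  inter_eq : S ∩ {v | v ∈ P.support} = {y}
  adj : ∀ ⦃u w⦄, G.Adj u w → w ∈ B → ((⊤ : G.Subgraph).induce S ⊔ P.toSubgraph).Adj u w
  connected : ((⊤ : G.Subgraph).induce S).Connected
  two_le_ncard : ∀ v ∈ S, 2 ≤ (((⊤ : G.Subgraph).induce S).neighborSet v).ncard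

lemma isLollipop_nil [Finite V] (hG : G.Connected) (hc : c ∉ B)
    (hB : ∀ b ∈ B, G.neighborSet b ⊆ insert c B) (hdeg : ∀ b ∈ B, 2 ≤ (G.neighborSet b).ncard)
    (hc₂ : 2 ≤ (G.neighborSet c ∩ B).ncard) :
    IsLollipop G c B (Walk.nil : G.Walk c c) (insert c B) where
  isPath := .nil
  union_eq := by simp
  inter_eq := by simp
  adj _ w huw hw := .inl ⟨hB w hw huw.symm, .inr hw, huw⟩
  connected := connected_induce_iff.mp (connected_induce_insert hG hc hB)
  two_le_ncard v hv := by
    rw [Subgraph.neighborSet_induce_top hv]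
    rcases hv with rfl | hv
    · exact hc₂.trans (Set.ncard_le_ncard (Set.inter_subset_inter_right _ (Set.subset_insert _ _)))
    · rw [Set.inter_eq_left.mpr (hB v hv)]
      exact hdeg v hv

variable {y : V} {P : G.Walk c y} {S : Set V}

namespace IsLollipop

lemma plate_subset (h : IsLollipop G c B P S) : S ⊆ insert c B :=
  h.union_eq ▸ Set.subset_union_left

lemma support_subset (h : IsLollipop G c B P S) : {v | v ∈ P.support} ⊆ insert c B :=
  h.union_eq ▸ Set.subset_union_right

lemma eq_of_mem (h : IsLollipop G c B P S) (hc : c ∈ S) : c = y :=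
  h.inter_eq.subset ⟨hc, P.start_mem_support⟩

lemma verts_sup (h : IsLollipop G c B P S) :
    ((⊤ : G.Subgraph).induce S ⊔ P.toSubgraph).verts = insert c B := by
  simp [Walk.verts_toSubgraph, h.union_eq]

lemma cons {w : V} {P : G.Walk w y} (h : IsLollipop G w (B \ {w}) P S) (hcw : G.Adj c w)
    (hc : c ∉ B) (hw : w ∈ B) (hNw : G.neighborSet w ⊆ insert c B) :
    IsLollipop G c B (.cons hcw P) S := by
  have hwB : insert w (B \ {w}) = B := by rw [Set.insert_sdiff_singleton, Set.insert_eq_of_mem hw]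
  have hcS : c ∉ S := fun hcS => hc (hwB ▸ h.plate_subset hcS)
  have hsupp : {v | v ∈ (Walk.cons hcw P).support} = insert c {v | v ∈ P.support} :=
    Set.ext fun _ => List.mem_cons
  refine ⟨h.isPath.cons fun hcP => hc (hwB ▸ h.support_subset hcP), ?_, ?_, ?_, h.connected,
    h.two_le_ncard⟩
  · rw [hsupp, Set.union_insert, h.union_eq, hwB]
  · rw [hsupp, Set.inter_insert_of_notMem hcS, h.inter_eq]
  · have hle : (⊤ : G.Subgraph).induce S ⊔ P.toSubgraph ≤
        (⊤ : G.Subgraph).induce S ⊔ (Walk.cons hcw P).toSubgraph :=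
      sup_le_sup_left le_sup_right _
    intro u z huz hz
    by_cases hzw : z = w
    · subst hzw
      rcases hNw huz.symm with rfl | hu
      · exact .inr (by simp)
      · exact hle.2 (h.adj huz.symm ⟨hu, huz.ne⟩).symm
    · exact hle.2 (h.adj huz ⟨hz, hzw⟩)

end IsLollipop

end Side

theorem exists_isLollipop [Finite V] {c : V} {B : Set V} (hG : G.Connected) (hc : c ∉ B)
    (hBne : B.Nonempty)
    (hB : ∀ b ∈ B, G.neighborSet b ⊆ insert c B) (hdeg : ∀ b ∈ B, 2 ≤ (G.neighborSet b).ncard) :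
    ∃ (y : V) (P : G.Walk c y) (S : Set V), IsLollipop G c B P S := by
  by_cases hc₂ : 2 ≤ (G.neighborSet c ∩ B).ncard
  · exact ⟨c, .nil, _, isLollipop_nil hG hc hB hdeg hc₂⟩
  obtain ⟨w, hw, hcw⟩ :=
    exists_adj_of_connected_induce_insert (connected_induce_insert hG hc hB) hc hBne
  have huniq : ∀ z ∈ B, G.Adj c z → z = w := fun z hz hcz =>
    (Set.ncard_le_one_iff (s := G.neighborSet c ∩ B)).mp (by omega) ⟨hcz, hz⟩ ⟨hcw, hw⟩
  obtain ⟨w', hww', hw'c⟩ := Set.exists_ne_of_one_lt_ncard (hdeg w hw) c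
  have hw' : w' ∈ B \ {w} := ⟨(hB w hw hww').resolve_left hw'c, (G.ne_of_adj hww').symm⟩
  have hB' : ∀ b ∈ B \ {w}, G.neighborSet b ⊆ insert w (B \ {w}) := by
    rintro b ⟨hb, hbw⟩ z hz
    rcases hB b hb hz with hzc | hz'
    · exact absurd (huniq b hb (hzc ▸ G.adj_symm hz)) hbw
    · by_cases hzw : z = w
      · exact .inl hzw
      · exact .inr ⟨hz', hzw⟩
  obtain ⟨y, P, S, h⟩ := exists_isLollipop (c := w) (B := B \ {w}) hG (fun h => h.2 rfl)
    ⟨w', hw'⟩ hB' fun b hb => hdeg b hb.1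
  exact ⟨y, .cons hcw P, S, h.cons hcw hc hw (hB w hw)⟩
termination_by B.ncard
decreasing_by exact Set.ncard_sdiff_singleton_lt_of_mem hw

section Glue

variable {v x y : V} {A B S₁ S₂ : Set V} {P₁ : G.Walk v x} {P₂ : G.Walk v y}

lemma IsLollipop.inter_union_support_eq (hAB : Disjoint A B) (h₁ : IsLollipop G v A P₁ S₁)
    (h₂ : IsLollipop G v B P₂ S₂) :
    S₁ ∩ ({u | u ∈ P₁.support} ∪ {u | u ∈ P₂.support}) = {x} := by
  rw [Set.inter_union_distrib_left, h₁.inter_eq, Set.union_eq_left]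
  rintro u ⟨hu₁, hu₂⟩
  obtain rfl := hAB.eq_of_mem_insert (h₁.plate_subset hu₁) (h₂.support_subset hu₂)
  exact h₁.eq_of_mem hu₁

lemma IsLollipop.sup_eq_top (hcover : ∀ u, u ≠ v → u ∈ A ∨ u ∈ B)
    (h₁ : IsLollipop G v A P₁ S₁) (h₂ : IsLollipop G v B P₂ S₂) :
    (⊤ : G.Subgraph).induce S₁ ⊔ (⊤ : G.Subgraph).induce S₂ ⊔ (P₁.reverse.append P₂).toSubgraph
      = ⊤ := by
  rw [Walk.toSubgraph_append, Walk.toSubgraph_reverse]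
  set H := (⊤ : G.Subgraph).induce S₁ ⊔ (⊤ : G.Subgraph).induce S₂ ⊔
    (P₁.toSubgraph ⊔ P₂.toSubgraph)
  have hle₁ : (⊤ : G.Subgraph).induce S₁ ⊔ P₁.toSubgraph ≤ H := sup_le_sup le_sup_left le_sup_left
  have hle₂ : (⊤ : G.Subgraph).induce S₂ ⊔ P₂.toSubgraph ≤ H :=
    sup_le_sup le_sup_right le_sup_right
  have hadj : ∀ u w, G.Adj u w → w ≠ v → H.Adj u w := fun u w huw hw =>
    (hcover w hw).elim (fun hw => hle₁.2 (h₁.adj huw hw)) fun hw => hle₂.2 (h₂.adj huw hw)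
  refine eq_top_iff.mpr ⟨fun u _ => ?_, fun u w huw => ?_⟩
  · by_cases hu : u = v
    · exact hle₁.1 (h₁.verts_sup ▸ .inl hu)
    · exact (hcover u hu).elim (fun hu => hle₁.1 (h₁.verts_sup ▸ .inr hu))
        fun hu => hle₂.1 (h₂.verts_sup ▸ .inr hu)
  · by_cases hw : w = v
    · subst hw
      exact (hadj w u huw.symm huw.ne).symm
    · exact hadj u w huw hw

theorem isDumbbell_of_isLollipop (hAB : Disjoint A B) (hcover : ∀ u, u ≠ v → u ∈ A ∨ u ∈ B)
    (h₁ : IsLollipop G v A P₁ S₁) (h₂ : IsLollipop G v B P₂ S₂) :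
    IsDumbbell G ((⊤ : G.Subgraph).induce S₁) ((⊤ : G.Subgraph).induce S₂) := by
  have hsupp : {u | u ∈ (P₁.reverse.append P₂).support} =
      {u | u ∈ P₁.support} ∪ {u | u ∈ P₂.support} := by
    ext
    simp [Walk.mem_support_append_iff]
  have hP : (P₁.reverse.append P₂).IsPath := h₁.isPath.reverse_append h₂.isPath
    fun _ hu₁ hu₂ => hAB.eq_of_mem_insert (h₁.support_subset hu₁) (h₂.support_subset hu₂)
  have hS₁ : S₁ ∩ {u | u ∈ (P₁.reverse.append P₂).support} = {x} := by
    rw [hsupp]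
    exact h₁.inter_union_support_eq hAB h₂
  have hS₂ : S₂ ∩ {u | u ∈ (P₁.reverse.append P₂).support} = {y} := by
    rw [hsupp, Set.union_comm]
    exact h₂.inter_union_support_eq hAB.symm h₁
  have hplates : ∀ u ∈ S₁, u ∈ S₂ → u = v := fun _ hu₁ hu₂ =>
    hAB.eq_of_mem_insert (h₁.plate_subset hu₁) (h₂.plate_subset hu₂)
  have htop := h₁.sup_eq_top hcover h₂
  refine ⟨fun u ⟨hu₁, hu₂⟩ w ⟨hw₁, hw₂⟩ => (hplates u hu₁ hu₂).trans (hplates w hw₁ hw₂).symm,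
    x, y, _, hP, fun u hu hux huy => ncard_neighborSet_eq_two_of_sup_eq_top hP htop hu hux huy
      (fun hu₁ => hux (hS₁.subset ⟨hu₁, hu⟩)) (fun hu₂ => huy (hS₂.subset ⟨hu₂, hu⟩)),
    htop, hS₁, hS₂, fun hxy => Set.disjoint_left.mpr fun u hu₁ hu₂ => hxy ?_⟩
  obtain rfl := hplates u hu₁ hu₂
  exact (h₁.eq_of_mem hu₁).symm.trans (h₂.eq_of_mem hu₂)

end Glue

section Separation

variable {v : V} {A : Set V}

lemma exists_side_of_not_preconnected_induce (h : ¬(G.induce {u | u ≠ v}).Preconnected) :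
    ∃ A : Set V, v ∉ A ∧ A.Nonempty ∧ (insert v A)ᶜ.Nonempty ∧
      ∀ a ∈ A, G.neighborSet a ⊆ insert v A := by
  simp only [Preconnected, not_forall] at h
  obtain ⟨⟨a, ha⟩, ⟨b, hb⟩, hab⟩ := h
  refine ⟨{u | ∃ hu : u ≠ v, (G.induce {u | u ≠ v}).Reachable ⟨a, ha⟩ ⟨u, hu⟩},
    fun ⟨hv, _⟩ => hv rfl, ⟨a, show ∃ _, _ from ⟨ha, .rfl⟩⟩, ⟨b, ?_⟩, ?_⟩
  · rintro (hbv | ⟨_, hab'⟩)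
    · exact hb hbv
    · exact hab hab'
  · rintro u ⟨hu, hau⟩ z hz
    by_cases hzv : z = v
    · exact .inl hzv
    · exact .inr ⟨hzv, hau.trans (Adj.reachable (show (G.induce _).Adj ⟨u, hu⟩ ⟨z, hzv⟩ from hz))⟩

lemma neighborSet_subset_insert_compl (hA : ∀ a ∈ A, G.neighborSet a ⊆ insert v A) :
    ∀ b ∈ (insert v A)ᶜ, G.neighborSet b ⊆ insert v (insert v A)ᶜ := by
  intro b hb z hz
  by_cases hzv : z = v
  · exact .inl hzv
  refine .inr fun hz' => hb ?_
  rcases hz' with hzv' | hzA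
  · exact absurd hzv' hzv
  · exact hA z hzA (G.adj_symm hz)

lemma exists_not_preconnected_induce_of_not_twoConnected [Fintype V] (hG : G.Connected)
    (hdeg : ∀ v, 2 ≤ (G.neighborSet v).ncard) (h : ¬TwoConnected G) :
    ∃ v, ¬(G.induce {u | u ≠ v}).Preconnected := by
  have := hG.nonempty
  obtain ⟨v, hv⟩ : ∃ v, ¬(G.induce {u | u ≠ v}).Connected := by
    by_contra! hall
    exact h ⟨hG, three_le_card_of_two_le_ncard_neighborSet hdeg, hall⟩
  obtain ⟨u, hu⟩ := Set.nonempty_of_ncard_ne_zero (s := G.neighborSet v) (by linarith [hdeg v])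
  exact ⟨v, fun hpre => hv ((connected_iff _).mpr ⟨hpre, ⟨⟨u, (G.ne_of_adj hu).symm⟩⟩⟩)⟩

end Separation

end SimpleGraph

theorem stmt_6_general {V : Type*} [Fintype V] (G : SimpleGraph V)
    (hconn : G.Connected) (hdeg : ∀ v : V, 2 ≤ (G.neighborSet v).ncard) :
    TwoConnected G ∨
      ∃ H₁ H₂ : G.Subgraph, IsDumbbell G H₁ H₂ ∧
        H₁.coe.Connected ∧ H₂.coe.Connected ∧
        (∀ v ∈ H₁.verts, 2 ≤ (H₁.neighborSet v).ncard) ∧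
        (∀ v ∈ H₂.verts, 2 ≤ (H₂.neighborSet v).ncard) := by
  refine or_iff_not_imp_left.mpr fun h2c => ?_
  obtain ⟨v, hv⟩ := exists_not_preconnected_induce_of_not_twoConnected hconn hdeg h2c
  obtain ⟨A, hvA, hA, hB, hAcl⟩ := exists_side_of_not_preconnected_induce hv
  obtain ⟨x, P₁, S₁, h₁⟩ := exists_isLollipop hconn hvA hA hAcl fun a _ => hdeg a
  obtain ⟨y, P₂, S₂, h₂⟩ := exists_isLollipop hconn
    (Set.notMem_compl_iff.mpr (Set.mem_insert v A)) hB (neighborSet_subset_insert_compl hAcl)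
    fun b _ => hdeg b
  have hAB : Disjoint A (insert v A)ᶜ :=
    Set.disjoint_compl_right_iff_subset.mpr (Set.subset_insert v A)
  have hcover : ∀ u, u ≠ v → u ∈ A ∨ u ∈ (insert v A)ᶜ := fun u hu =>
    (em (u ∈ A)).imp_right fun huA => by simp [hu, huA]
  exact ⟨_, _, isDumbbell_of_isLollipop hAB hcover h₁ h₂, h₁.connected, h₂.connected,
    h₁.two_le_ncard, h₂.two_le_ncard⟩

/-- A finite connected graph with minimum degree at least 2 is 2-connected or an
`(H₁,H₂)`-dumbbell for some connected plates `H₁`, `H₂` of minimum degree at least 2. -/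
theorem stmt_6 {V : Type*} [Fintype V] [DecidableEq V] (G : SimpleGraph V)
    (hconn : G.Connected) (hdeg : ∀ v : V, 2 ≤ (G.neighborSet v).ncard) :
    TwoConnected G ∨
      ∃ H₁ H₂ : G.Subgraph, IsDumbbell G H₁ H₂ ∧
        H₁.coe.Connected ∧ H₂.coe.Connected ∧
        (∀ v ∈ H₁.verts, 2 ≤ (H₁.neighborSet v).ncard) ∧
        (∀ v ∈ H₂.verts, 2 ≤ (H₂.neighborSet v).ncard) :=
  stmt_6_general G hconn hdeg
end

section
/- If a finite simple graph G has fractional domatic number strictly greater than 2, then there exists a natural number q such that for every k ≥ q the graph G admits a (2k+1, k)-configuration. -/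
open SimpleGraph

/-- If a finite graph has fractional domatic number greater than 2, then it admits a
`(2k+1, k)`-configuration for every sufficiently large `k`. -/
theorem stmt_8 {V : Type*} [Fintype V] [DecidableEq V] (G : SimpleGraph V)
    (h : 2 < fracDomatic G) :
    ∃ q : ℕ, ∀ k : ℕ, q ≤ k → ∃ 𝒟 : Multiset (Finset V), IsConfig G 𝒟 (2 * k + 1) k := by
  have hne : {x : ℝ | ∃ k s : ℕ, 0 < s ∧ (∃ 𝒟 : Multiset (Finset V), IsConfig G 𝒟 k s) ∧
      x = (k : ℝ) / (s : ℝ)}.Nonempty := by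
    by_contra hne
    rw [Set.not_nonempty_iff_eq_empty] at hne
    rw [fracDomatic, hne, Real.sSup_empty] at h
    norm_num at h
  obtain ⟨x, hx, hx2⟩ := exists_lt_of_lt_csSup hne h
  obtain ⟨k₀, s₀, hs₀, ⟨𝒟₀, hcard, hdom, hcount⟩, rfl⟩ := hx
  have hs₀R : (0 : ℝ) < (s₀ : ℝ) := by exact_mod_cast hs₀
  have hk₀R : 2 * (s₀ : ℝ) < (k₀ : ℝ) := by
    have := (lt_div_iff₀ hs₀R).mp hx2
    linarith
  have hk₀ : 2 * s₀ < k₀ := by exact_mod_cast hk₀R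
  refine ⟨s₀ * (k₀ + 1), fun k hk => ?_⟩
  have hk₀pos : 0 < k₀ := by omega
  set m := (2 * k + 1) / k₀ with hm
  set r := (2 * k + 1) % k₀ with hr
  have hrlt : r < k₀ := Nat.mod_lt _ hk₀pos
  have hlen : 𝒟₀.toList.length = k₀ := by
    rw [Multiset.length_toList, hcard]
  refine ⟨m • 𝒟₀ + ↑(𝒟₀.toList.take r), ?_, ?_, ?_⟩
  · rw [Multiset.card_add, Multiset.card_nsmul, hcard, Multiset.coe_card,
      List.length_take, hlen, min_eq_left hrlt.le]
    have h3 : m * k₀ + r = 2 * k + 1 := by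
      rw [Nat.mul_comm]; exact Nat.div_add_mod _ _
    omega
  · intro D hD
    rcases Multiset.mem_add.mp hD with hD | hD
    · exact hdom D (Multiset.mem_of_mem_nsmul hD)
    · exact hdom D (by
        rw [← Multiset.mem_toList]
        exact List.mem_of_mem_take (Multiset.mem_coe.mp hD))
  · intro v
    rw [Multiset.countP_add, Multiset.countP_nsmul]
    have h1 : Multiset.countP (fun D => v ∈ D) (↑(𝒟₀.toList.take r) : Multiset (Finset V)) ≤ s₀ := by
      have hle : (↑(𝒟₀.toList.take r) : Multiset (Finset V)) ≤ 𝒟₀ := le_trans (Multiset.coe_le.mpr (List.take_sublist r 𝒟₀.toList).subperm)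
        (le_of_eq 𝒟₀.coe_toList)
      exact le_trans (Multiset.countP_le_of_le _ hle) (by simpa using hcount v)
    have h2 : m * Multiset.countP (fun D => v ∈ D) 𝒟₀ ≤ m * s₀ :=
      Nat.mul_le_mul_left m (by simpa using hcount v)
    have hmk : m * k₀ ≤ 2 * k + 1 := Nat.div_mul_le_self _ _
    have key : (m + 1) * s₀ ≤ k := by
      by_contra hc
      push_neg at hc
      have hc' : k + 1 ≤ (m + 1) * s₀ := hc
      have := Nat.mul_le_mul_right k₀ hc'
      nlinarith [hmk, hk, hk₀, hs₀]
    calc m * Multiset.countP (fun D => v ∈ D) 𝒟₀ +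
          Multiset.countP (fun D => v ∈ D) (↑(𝒟₀.toList.take r) : Multiset (Finset V))
        ≤ m * s₀ + s₀ := Nat.add_le_add h2 h1
      _ = (m + 1) * s₀ := by ring
      _ ≤ k := key
end

section
/- Let G be a finite simple graph and let P = (x, v₁, v₂, …, v_s, y) be a binary path in G with at least two vertices (so x ≠ y, and s ≥ 0). If the graph H = G − {v₁, v₂, …, v_s} obtained by deleting the internal vertices of P has an (x,y)-nice (2r+1, r)-configuration, then G has a (2r+1, r)-configuration. -/
open SimpleGraph

/-- A `(2r+1, r)`-configuration `𝒟` of `G` is `(x,y)`-nice if each of `x` and `y`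
belongs to exactly `r` of its sets, and the three subfamilies of sets containing
`x` but not `y`, containing `y` but not `x`, and containing both `x` and `y`,
are all nonempty. -/
def IsNice {V : Type*} [DecidableEq V] (G : SimpleGraph V) (x y : V)
    (𝒟 : Multiset (Finset V)) (r : ℕ) : Prop :=
  IsConfig G 𝒟 (2 * r + 1) r ∧
  𝒟.countP (fun D => x ∈ D) = r ∧
  𝒟.countP (fun D => y ∈ D) = r ∧
  0 < 𝒟.countP (fun D => x ∈ D ∧ y ∉ D) ∧
  0 < 𝒟.countP (fun D => y ∈ D ∧ x ∉ D) ∧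
  0 < 𝒟.countP (fun D => x ∈ D ∧ y ∈ D)

lemma countP_and_split' {α : Type*} (s : Multiset α) (p q : α → Prop)
    [DecidablePred p] [DecidablePred q] :
    s.countP p = s.countP (fun a => p a ∧ q a) + s.countP (fun a => p a ∧ ¬ q a) := by
  induction s using Multiset.induction_on with
  | empty => simp
  | cons a t ih =>
    simp only [Multiset.countP_cons, ih]
    by_cases hp : p a <;> by_cases hq : q a <;> simp [hp, hq] <;> omega

lemma countP_add_not' {α : Type*} (s : Multiset α) (p : α → Prop) [DecidablePred p] :
    s.countP p + s.countP (fun a => ¬ p a) = Multiset.card s := by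
  induction s using Multiset.induction_on with
  | empty => simp
  | cons a t ih =>
    simp only [Multiset.countP_cons, Multiset.card_cons]
    by_cases hp : p a <;> simp [hp] <;> omega

lemma countP_ite4' {α : Type*} (s : Multiset α) (p q : α → Prop)
    [DecidablePred p] [DecidablePred q] (a b c d t : ℕ) :
    s.countP (fun D => t = (if p D then if q D then a else b else if q D then c else d)) =
      (if t = a then s.countP (fun D => p D ∧ q D) else 0)
      + (if t = b then s.countP (fun D => p D ∧ ¬ q D) else 0)
      + (if t = c then s.countP (fun D => ¬ p D ∧ q D) else 0)
      + (if t = d then s.countP (fun D => ¬ p D ∧ ¬ q D) else 0) := by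
  induction s using Multiset.induction_on with
  | empty => simp
  | cons x u ih =>
    simp only [Multiset.countP_cons, ih]
    by_cases hp : p x <;> by_cases hq : q x <;>
      simp only [hp, hq, if_true, if_false, not_true, not_false_iff, and_true, and_false,
        true_and, false_and] <;> split_ifs <;> omega


lemma cnt1' {α : Type*} [DecidableEq α] (s : Multiset (Finset α)) (X Y : α) :
    s.countP (fun D => X ∈ D) =
      s.countP (fun D => X ∈ D ∧ Y ∈ D) + s.countP (fun D => X ∈ D ∧ Y ∉ D) := by
  induction s using Multiset.induction_on with
  | empty => simp
  | cons a t ih =>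
    simp only [Multiset.countP_cons, ih]
    by_cases hX : X ∈ a <;> by_cases hY : Y ∈ a <;> simp [hX, hY] <;> omega

lemma cnt2' {α : Type*} [DecidableEq α] (s : Multiset (Finset α)) (X Y : α) :
    s.countP (fun D => Y ∈ D) =
      s.countP (fun D => X ∈ D ∧ Y ∈ D) + s.countP (fun D => Y ∈ D ∧ X ∉ D) := by
  induction s using Multiset.induction_on with
  | empty => simp
  | cons a t ih =>
    simp only [Multiset.countP_cons, ih]
    by_cases hX : X ∈ a <;> by_cases hY : Y ∈ a <;> simp [hX, hY] <;> omega

lemma cnt3' {α : Type*} [DecidableEq α] (s : Multiset (Finset α)) (X Y : α) :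
    Multiset.card s =
      s.countP (fun D => X ∈ D ∧ Y ∈ D) + s.countP (fun D => X ∈ D ∧ Y ∉ D)
      + s.countP (fun D => Y ∈ D ∧ X ∉ D) + s.countP (fun D => X ∉ D ∧ Y ∉ D) := by
  induction s using Multiset.induction_on with
  | empty => simp
  | cons a t ih =>
    simp only [Multiset.countP_cons, Multiset.card_cons, ih]
    by_cases hX : X ∈ a <;> by_cases hY : Y ∈ a <;> simp [hX, hY] <;> omega

lemma cnt4' {α : Type*} [DecidableEq α] (s : Multiset (Finset α)) (X Y : α) (a b c d t : ℕ) :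
    s.countP (fun D => t = (if X ∈ D then if Y ∈ D then a else b
        else if Y ∈ D then c else d)) =
      (if t = a then s.countP (fun D => X ∈ D ∧ Y ∈ D) else 0)
      + (if t = b then s.countP (fun D => X ∈ D ∧ Y ∉ D) else 0)
      + (if t = c then s.countP (fun D => Y ∈ D ∧ X ∉ D) else 0)
      + (if t = d then s.countP (fun D => X ∉ D ∧ Y ∉ D) else 0) := by
  induction s using Multiset.induction_on with
  | empty => simp
  | cons u w ih =>
    simp only [Multiset.countP_cons, ih]
    by_cases hX : X ∈ u <;> by_cases hY : Y ∈ u <;>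
      simp only [hX, hY, if_true, if_false, not_true, not_false_iff, and_true, and_false,
        true_and, false_and] <;> split_ifs <;> omega

lemma getVert_injOn' {V : Type*} {G : SimpleGraph V} {u v : V} (p : G.Walk u v)
    (hp : p.IsPath) : ∀ i, i ≤ p.length → ∀ j, j ≤ p.length →
      p.getVert i = p.getVert j → i = j := by
  induction p with
  | nil => intro i hi j hj _; simp at hi hj; omega
  | @cons u' v' w' h q ih =>
    rw [SimpleGraph.Walk.cons_isPath_iff] at hp
    intro i hi j hj hij
    simp only [SimpleGraph.Walk.length_cons] at hi hj
    match i, j with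
    | 0, 0 => rfl
    | 0, j+1 =>
      exact absurd (SimpleGraph.Walk.mem_support_iff_exists_getVert.mpr
        ⟨j, by simpa using hij.symm, by omega⟩) hp.2
    | i+1, 0 =>
      exact absurd (SimpleGraph.Walk.mem_support_iff_exists_getVert.mpr
        ⟨i, by simpa using hij, by omega⟩) hp.2
    | i+1, j+1 =>
      have := ih hp.1 i (by omega) j (by omega) (by simpa using hij)
      omega

/-- Ear extension: if `P = (x, v₁, …, v_s, y)` is a binary path in `G` with at least
two vertices and the graph obtained from `G` by deleting the internal vertices of `P`
has an `(x,y)`-nice `(2r+1, r)`-configuration, then `G` has a `(2r+1, r)`-configuration. -/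
theorem stmt_9 {V : Type*} [Fintype V] [DecidableEq V] (G : SimpleGraph V)
    {x y : V} (hxy : x ≠ y) (P : G.Walk x y) (hP : P.IsPath)
    (hbin : ∀ v ∈ P.support, v ≠ x → v ≠ y → (G.neighborSet v).ncard = 2)
    (r : ℕ)
    (hx : x ∈ {v : V | ¬(v ∈ P.support ∧ v ≠ x ∧ v ≠ y)})
    (hy : y ∈ {v : V | ¬(v ∈ P.support ∧ v ≠ x ∧ v ≠ y)})
    (𝒟 : Multiset (Finset {v : V | ¬(v ∈ P.support ∧ v ≠ x ∧ v ≠ y)}))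
    (hnice : IsNice (G.induce {v : V | ¬(v ∈ P.support ∧ v ≠ x ∧ v ≠ y)})
      ⟨x, hx⟩ ⟨y, hy⟩ 𝒟 r) :
    ∃ 𝒟' : Multiset (Finset V), IsConfig G 𝒟' (2 * r + 1) r := by
  classical
  revert hnice
  revert 𝒟
  set S : Set V := {v : V | ¬(v ∈ P.support ∧ v ≠ x ∧ v ≠ y)} with hSdef
  intro 𝒟 hnice
  obtain ⟨⟨hcard, hdomH, hcnt⟩, hxr, hyr, hpx, hpy, hpxy⟩ := hnice
  set n := P.length with hn
  have hn0 : 0 < n := by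
    rcases Nat.eq_zero_or_pos n with h | h
    · exact absurd (SimpleGraph.Walk.eq_of_length_eq_zero h) hxy
    · exact h
  set vt : ℕ → V := fun i => P.getVert i with hvt
  have hvt0 : vt 0 = x := P.getVert_zero
  have hvtn : vt n = y := P.getVert_length
  have hinj : ∀ i, i ≤ n → ∀ j, j ≤ n → vt i = vt j → i = j := getVert_injOn' P hP
  have hadjv : ∀ i, i < n → G.Adj (vt i) (vt (i+1)) := fun i hi => P.adj_getVert_succ hi
  have hsupp : ∀ i, i ≤ n → vt i ∈ P.support := fun i hi =>
    SimpleGraph.Walk.mem_support_iff_exists_getVert.mpr ⟨i, rfl, hi⟩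
  have hvtnS : ∀ i, 0 < i → i < n → vt i ∉ S := by
    intro i h1 h2 hiS
    refine hiS ⟨hsupp i (le_of_lt h2), fun hxeq => ?_, fun hyeq => ?_⟩
    · have := hinj i (by omega) 0 (by omega) (by rw [hxeq, hvt0])
      omega
    · have := hinj i (by omega) n (by omega) (by rw [hyeq, hvtn])
      omega
  have hnotS : ∀ v : V, v ∉ S → ∃ i, 0 < i ∧ i < n ∧ v = vt i := by
    intro v hv
    simp only [hSdef, Set.mem_setOf_eq, not_not] at hv
    obtain ⟨hvsupp, hvx, hvy⟩ := hv
    obtain ⟨i, hie, hile⟩ := SimpleGraph.Walk.mem_support_iff_exists_getVert.mp hvsupp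
    refine ⟨i, ?_, ?_, hie.symm⟩
    · rcases Nat.eq_zero_or_pos i with h | h
      · exact absurd (by rw [← hie, h]; exact P.getVert_zero) hvx
      · exact h
    · rcases Nat.lt_or_ge i n with h | h
      · exact h
      · have : i = n := by omega
        exact absurd (by rw [← hie, this]; exact P.getVert_length) hvy
  set ext : Finset ↥S → ℕ → Finset V := fun D k =>
    D.image Subtype.val ∪ ((Finset.Ioo 0 n).filter (fun i => i % 3 = k % 3)).image vt
    with hext
  have hmemS : ∀ (D : Finset ↥S) (k : ℕ) (w : V) (hw : w ∈ S),
      (w ∈ ext D k ↔ (⟨w, hw⟩ : ↥S) ∈ D) := by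
    intro D k w hw
    simp only [hext, Finset.mem_union, Finset.mem_image, Finset.mem_filter, Finset.mem_Ioo]
    constructor
    · rintro (⟨u, hu, rfl⟩ | ⟨i, ⟨⟨hi0, hin⟩, _⟩, rfl⟩)
      · have : (⟨(u : V), hw⟩ : ↥S) = u := Subtype.ext rfl
        rw [this]; exact hu
      · exact absurd hw (hvtnS i hi0 hin)
    · intro hD
      exact Or.inl ⟨⟨w, hw⟩, hD, rfl⟩
  have hmemI : ∀ (D : Finset ↥S) (k i : ℕ), 0 < i → i < n →
      (vt i ∈ ext D k ↔ i % 3 = k % 3) := by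
    intro D k i h0 h1
    simp only [hext, Finset.mem_union, Finset.mem_image, Finset.mem_filter, Finset.mem_Ioo]
    constructor
    · rintro (⟨u, _, hequ⟩ | ⟨j, ⟨⟨hj0, hjn⟩, hj3⟩, hj⟩)
      · exact absurd (hequ ▸ u.2) (hvtnS i h0 h1)
      · have := hinj j (by omega) i (by omega) hj
        omega
    · intro h3
      exact Or.inr ⟨i, ⟨⟨h0, h1⟩, h3⟩, rfl⟩
  have hdomext : ∀ D ∈ 𝒟, ∀ k : ℕ,
      (k % 3 = 0 → (⟨x, hx⟩ : ↥S) ∈ D) → (k % 3 = n % 3 → (⟨y, hy⟩ : ↥S) ∈ D) →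
      Dominating G (ext D k) := by
    intro D hD k hk0 hkn v hv
    by_cases hvS : v ∈ S
    · have hvD : (⟨v, hvS⟩ : ↥S) ∉ D := fun h => hv ((hmemS D k v hvS).mpr h)
      obtain ⟨u, hu, hadj⟩ := hdomH D hD ⟨v, hvS⟩ hvD
      refine ⟨u.val, ?_, ?_⟩
      · refine (hmemS D k u.val u.2).mpr ?_
        have : (⟨(u : V), u.2⟩ : ↥S) = u := Subtype.ext rfl
        rw [this]; exact hu
      · simpa using hadj
    · obtain ⟨i, hi0, hin, rfl⟩ := hnotS v hvS
      have hik : ¬ (i % 3 = k % 3) := fun h => hv ((hmemI D k i hi0 hin).mpr h)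
      rcases (by omega : i % 3 = (k+1) % 3 ∨ i % 3 = (k + 2) % 3) with h | h
      · by_cases hi1 : i = 1
        · have hxD : (⟨x, hx⟩ : ↥S) ∈ D := hk0 (by omega)
          refine ⟨x, (hmemS D k x hx).mpr hxD, ?_⟩
          have hax := hadjv 0 hn0
          rw [hvt0] at hax
          rw [hi1]
          exact hax.symm
        · refine ⟨vt (i-1), ?_, ?_⟩
          · exact (hmemI D k (i-1) (by omega) (by omega)).mpr (by omega)
          · have hax := hadjv (i-1) (by omega)
            have : i - 1 + 1 = i := by omega
            rw [this] at hax
            exact hax.symm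
      · by_cases hin1 : i = n - 1
        · have hyD : (⟨y, hy⟩ : ↥S) ∈ D := hkn (by omega)
          refine ⟨y, (hmemS D k y hy).mpr hyD, ?_⟩
          have hax := hadjv (n-1) (by omega)
          have h1 : n - 1 + 1 = n := by omega
          rw [h1, hvtn] at hax
          rw [hin1]
          exact hax
        · refine ⟨vt (i+1), ?_, ?_⟩
          · exact (hmemI D k (i+1) (by omega) (by omega)).mpr (by omega)
          · exact hadjv i (by omega)
  -- counting bookkeeping on 𝒟
  have e1 : 𝒟.countP (fun D => (⟨x, hx⟩ : ↥S) ∈ D) =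
      𝒟.countP (fun D => (⟨x, hx⟩ : ↥S) ∈ D ∧ (⟨y, hy⟩ : ↥S) ∈ D)
      + 𝒟.countP (fun D => (⟨x, hx⟩ : ↥S) ∈ D ∧ (⟨y, hy⟩ : ↥S) ∉ D) :=
    cnt1' 𝒟 _ _
  have e2 : 𝒟.countP (fun D => (⟨y, hy⟩ : ↥S) ∈ D) =
      𝒟.countP (fun D => (⟨x, hx⟩ : ↥S) ∈ D ∧ (⟨y, hy⟩ : ↥S) ∈ D)
      + 𝒟.countP (fun D => (⟨y, hy⟩ : ↥S) ∈ D ∧ (⟨x, hx⟩ : ↥S) ∉ D) :=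
    cnt2' 𝒟 _ _
  have e3 : Multiset.card 𝒟 =
      𝒟.countP (fun D => (⟨x, hx⟩ : ↥S) ∈ D ∧ (⟨y, hy⟩ : ↥S) ∈ D)
      + 𝒟.countP (fun D => (⟨x, hx⟩ : ↥S) ∈ D ∧ (⟨y, hy⟩ : ↥S) ∉ D)
      + 𝒟.countP (fun D => (⟨y, hy⟩ : ↥S) ∈ D ∧ (⟨x, hx⟩ : ↥S) ∉ D)
      + 𝒟.countP (fun D => (⟨x, hx⟩ : ↥S) ∉ D ∧ (⟨y, hy⟩ : ↥S) ∉ D) :=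
    cnt3' 𝒟 _ _
  rw [hcard] at e3
  rw [hxr] at e1
  rw [hyr] at e2
  have hNpos : 0 < 𝒟.countP (fun D => (⟨x, hx⟩ : ↥S) ∉ D ∧ (⟨y, hy⟩ : ↥S) ∉ D) := by
    omega
  obtain ⟨D₀, hD₀, hD₀x, hD₀y⟩ := Multiset.countP_pos.mp hNpos
  set e : Multiset (Finset ↥S) := 𝒟.erase D₀ with hedef
  have hcons : D₀ ::ₘ e = 𝒟 := Multiset.cons_erase hD₀
  have hc1 : 𝒟.countP (fun D => (⟨x, hx⟩ : ↥S) ∈ D ∧ (⟨y, hy⟩ : ↥S) ∈ D) =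
      e.countP (fun D => (⟨x, hx⟩ : ↥S) ∈ D ∧ (⟨y, hy⟩ : ↥S) ∈ D) := by
    conv_lhs => rw [← hcons]
    rw [Multiset.countP_cons]
    have hne : ¬((⟨x, hx⟩ : ↥S) ∈ D₀ ∧ (⟨y, hy⟩ : ↥S) ∈ D₀) := fun hh => hD₀x hh.1
    rw [if_neg hne]
    exact Nat.add_zero _
  have hc2 : 𝒟.countP (fun D => (⟨x, hx⟩ : ↥S) ∈ D ∧ (⟨y, hy⟩ : ↥S) ∉ D) =
      e.countP (fun D => (⟨x, hx⟩ : ↥S) ∈ D ∧ (⟨y, hy⟩ : ↥S) ∉ D) := by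
    conv_lhs => rw [← hcons]
    rw [Multiset.countP_cons]
    have hne : ¬((⟨x, hx⟩ : ↥S) ∈ D₀ ∧ (⟨y, hy⟩ : ↥S) ∉ D₀) := fun hh => hD₀x hh.1
    rw [if_neg hne]
    exact Nat.add_zero _
  have hc3 : 𝒟.countP (fun D => (⟨y, hy⟩ : ↥S) ∈ D ∧ (⟨x, hx⟩ : ↥S) ∉ D) =
      e.countP (fun D => (⟨y, hy⟩ : ↥S) ∈ D ∧ (⟨x, hx⟩ : ↥S) ∉ D) := by
    conv_lhs => rw [← hcons]
    rw [Multiset.countP_cons]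
    have hne : ¬((⟨y, hy⟩ : ↥S) ∈ D₀ ∧ (⟨x, hx⟩ : ↥S) ∉ D₀) := fun hh => hD₀y hh.1
    rw [if_neg hne]
    exact Nat.add_zero _
  have hc4 : 𝒟.countP (fun D => (⟨x, hx⟩ : ↥S) ∉ D ∧ (⟨y, hy⟩ : ↥S) ∉ D) =
      e.countP (fun D => (⟨x, hx⟩ : ↥S) ∉ D ∧ (⟨y, hy⟩ : ↥S) ∉ D) + 1 := by
    conv_lhs => rw [← hcons]
    rw [Multiset.countP_cons]
    have hpo : ((⟨x, hx⟩ : ↥S) ∉ D₀ ∧ (⟨y, hy⟩ : ↥S) ∉ D₀) := ⟨hD₀x, hD₀y⟩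
    rw [if_pos hpo]
  have hce : Multiset.card e + 1 = 2 * r + 1 := by
    have h := congrArg Multiset.card hcons
    rw [Multiset.card_cons, hcard] at h
    omega
  set xk : ℕ := if n % 3 = 0 then 1 else 0 with hxkdef
  set yk : ℕ := if n % 3 = 1 then 1 else 2 with hykdef
  set nk : ℕ := if n % 3 = 1 then 2 else 1 with hnkdef
  set k0 : ℕ := if n % 3 = 2 then 1 else 2 with hk0def
  have hk0lt : k0 < 3 := by rw [hk0def]; split_ifs <;> omega
  have hKlt : ∀ D : Finset ↥S,
      (if (⟨x, hx⟩ : ↥S) ∈ D then (if (⟨y, hy⟩ : ↥S) ∈ D then 0 else xk)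
        else (if (⟨y, hy⟩ : ↥S) ∈ D then yk else nk)) < 3 := by
    intro D
    rw [hxkdef, hykdef, hnkdef]
    split_ifs <;> omega
  refine ⟨ext D₀ k0 ::ₘ e.map (fun D => ext D
      (if (⟨x, hx⟩ : ↥S) ∈ D then (if (⟨y, hy⟩ : ↥S) ∈ D then 0 else xk)
        else (if (⟨y, hy⟩ : ↥S) ∈ D then yk else nk))), ?_, ?_, ?_⟩
  · rw [Multiset.card_cons, Multiset.card_map]
    omega
  · intro E hE
    rcases Multiset.mem_cons.mp hE with rfl | hE'
    · refine hdomext D₀ hD₀ k0 ?_ ?_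
      · intro h
        exfalso
        rw [hk0def] at h
        split_ifs at h <;> omega
      · intro h
        exfalso
        rw [hk0def] at h
        split_ifs at h <;> omega
    · obtain ⟨D, hDe, rfl⟩ := Multiset.mem_map.mp hE'
      have hD𝒟 : D ∈ 𝒟 := Multiset.mem_of_mem_erase hDe
      refine hdomext D hD𝒟 _ ?_ ?_
      · intro h
        by_contra hX
        rw [if_neg hX] at h
        rw [hykdef, hnkdef] at h
        split_ifs at h <;> omega
      · intro h
        by_contra hY
        simp only [if_neg hY] at h
        rw [hxkdef, hnkdef] at h
        split_ifs at h <;> omega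
  · intro v
    rw [Multiset.countP_cons]
    by_cases hvS : v ∈ S
    · have h2 : (e.map (fun D => ext D
          (if (⟨x, hx⟩ : ↥S) ∈ D then (if (⟨y, hy⟩ : ↥S) ∈ D then 0 else xk)
            else (if (⟨y, hy⟩ : ↥S) ∈ D then yk else nk)))).countP (fun E => v ∈ E)
          = e.countP (fun D => (⟨v, hvS⟩ : ↥S) ∈ D) := by
        rw [Multiset.countP_map, ← Multiset.countP_eq_card_filter]
        exact Multiset.countP_congr rfl (fun D _ => propext (hmemS D _ v hvS))
      have h1 : (if v ∈ ext D₀ k0 then 1 else 0 : ℕ)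
          = (if (⟨v, hvS⟩ : ↥S) ∈ D₀ then 1 else 0) :=
        if_congr (hmemS D₀ k0 v hvS) rfl rfl
      have h3 : 𝒟.countP (fun D => (⟨v, hvS⟩ : ↥S) ∈ D) =
          e.countP (fun D => (⟨v, hvS⟩ : ↥S) ∈ D)
          + (if (⟨v, hvS⟩ : ↥S) ∈ D₀ then 1 else 0) := by
        conv_lhs => rw [← hcons]
        rw [Multiset.countP_cons]
      rw [h2, h1, ← h3]
      exact hcnt ⟨v, hvS⟩
    · obtain ⟨i, hi0, hin, rfl⟩ := hnotS v hvS
      have h2 : (e.map (fun D => ext D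
          (if (⟨x, hx⟩ : ↥S) ∈ D then (if (⟨y, hy⟩ : ↥S) ∈ D then 0 else xk)
            else (if (⟨y, hy⟩ : ↥S) ∈ D then yk else nk)))).countP (fun E => vt i ∈ E)
          = e.countP (fun D => i % 3 =
          (if (⟨x, hx⟩ : ↥S) ∈ D then (if (⟨y, hy⟩ : ↥S) ∈ D then 0 else xk)
            else (if (⟨y, hy⟩ : ↥S) ∈ D then yk else nk))) := by
        rw [Multiset.countP_map, ← Multiset.countP_eq_card_filter]
        refine Multiset.countP_congr rfl (fun D _ => propext ?_)
        refine (hmemI D _ i hi0 hin).trans ?_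
        rw [Nat.mod_eq_of_lt (hKlt D)]
      have h1 : (if vt i ∈ ext D₀ k0 then 1 else 0 : ℕ)
          = (if i % 3 = k0 then 1 else 0) :=
        if_congr ((hmemI D₀ k0 i hi0 hin).trans
          (by rw [Nat.mod_eq_of_lt hk0lt])) rfl rfl
      have h5 : e.countP (fun D => i % 3 =
          (if (⟨x, hx⟩ : ↥S) ∈ D then (if (⟨y, hy⟩ : ↥S) ∈ D then 0 else xk)
            else (if (⟨y, hy⟩ : ↥S) ∈ D then yk else nk))) =
          (if i % 3 = 0 then e.countP (fun D => (⟨x, hx⟩ : ↥S) ∈ D ∧ (⟨y, hy⟩ : ↥S) ∈ D) else 0)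
          + (if i % 3 = xk then e.countP (fun D => (⟨x, hx⟩ : ↥S) ∈ D ∧ (⟨y, hy⟩ : ↥S) ∉ D) else 0)
          + (if i % 3 = yk then e.countP (fun D => (⟨y, hy⟩ : ↥S) ∈ D ∧ (⟨x, hx⟩ : ↥S) ∉ D) else 0)
          + (if i % 3 = nk then e.countP (fun D => (⟨x, hx⟩ : ↥S) ∉ D ∧ (⟨y, hy⟩ : ↥S) ∉ D) else 0) :=
        cnt4' e _ _ 0 xk yk nk (i % 3)
      rw [h2, h1, h5]
      rw [hxkdef, hykdef, hnkdef, hk0def]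
      split_ifs <;> omega
end

section
/- Let G be a (C₄, C₄)-dumbbell, i.e. an (H₁,H₂)-dumbbell in which both plates H₁ and H₂ are isomorphic to the 4-cycle. Then G admits a (7,3)-configuration. -/
/-!
A `(k, s)`-configuration is the same thing as a labelling of the vertices by sets of at most `s`
of `k` labels in which every closed neighbourhood sees every label: the dominating set of a label
consists of the vertices carrying it.

For a `(C₄, C₄)`-dumbbell take the seven labels `none` and `(r, b)` with `r : ZMod 3`. The `i`-th
vertex of the handle carries `none` and both labels of residue `i mod 3`, so any three consecutive
handle vertices see all labels. A plate attached at a handle vertex of residue `r`, whose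
neighbour on the handle has residue `r + d`, copies that neighbour's labels on its opposite corner
and puts the pair of the third residue plus one label of residue `r` on each side corner. If the
handle is a single vertex, the two plates together replace the missing handle neighbour.
-/

open SimpleGraph

open Finset

namespace SimpleGraph

variable {V L : Type*}

def closedNbhdLabels (G : SimpleGraph V) (F : V → Finset L) (v : V) : Set L :=
  {l | l ∈ F v ∨ ∃ u, G.Adj v u ∧ l ∈ F u}

variable {G : SimpleGraph V} {F : V → Finset L} {u v : V}

lemma coe_subset_closedNbhdLabels_self : (F v : Set L) ⊆ G.closedNbhdLabels F v :=
  fun _ hl => Or.inl hl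

lemma coe_subset_closedNbhdLabels_of_adj (h : G.Adj v u) :
    (F u : Set L) ⊆ G.closedNbhdLabels F v :=
  fun _ hl => Or.inr ⟨u, h, hl⟩

theorem exists_isConfig_of_closedNbhdLabels_eq_univ [Fintype V] [DecidableEq V] [Fintype L]
    [DecidableEq L] {s : ℕ} (hcard : ∀ v, #(F v) ≤ s)
    (hcov : ∀ v, G.closedNbhdLabels F v = Set.univ) :
    ∃ 𝒟 : Multiset (Finset V), IsConfig G 𝒟 (Fintype.card L) s := by
  refine ⟨(univ : Finset L).val.map fun l => ({v | l ∈ F v} : Finset V), by simp, ?_,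
    fun v => ?_⟩
  · simp only [Multiset.mem_map, mem_val, mem_univ, true_and, forall_exists_index,
      forall_apply_eq_imp_iff]
    intro l v hv
    obtain hl | ⟨u, huv, hu⟩ := (hcov v).symm ▸ Set.mem_univ l
    · exact absurd (by simpa using hl) hv
    · exact ⟨u, by simpa using hu, huv⟩
  · rw [Multiset.countP_map, ← filter_val, card_val]
    simpa using hcard v

lemma Walk.IsPath.idxOf_getVert [DecidableEq V] {x y : V} {P : G.Walk x y} (hP : P.IsPath)
    {j : ℕ} (hj : j ≤ P.length) : P.support.idxOf (P.getVert j) = j := by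
  rw [P.getVert_eq_support_getElem hj]
  exact hP.support_nodup.idxOf_getElem _ _

variable [DecidableEq L] {H : G.Subgraph} {n : ℕ}

lemma Subgraph.adj_symm_apply_add_one (e : H.coe ≃g cycleGraph (n + 2)) (v : H.verts) :
    G.Adj v (e.symm (e v + 1)) := by
  refine H.coe_adj_sub _ _ ?_
  conv_lhs => rw [← e.symm_apply_apply v]
  exact e.symm.map_adj_iff.mpr (cycleGraph_adj.mpr (Or.inr (add_sub_cancel_left _ _)))

lemma coe_subset_closedNbhdLabels_of_iso_cycleGraph {F : V → Finset L}
    (e : H.coe ≃g cycleGraph (n + 2)) (c : Fin (n + 2)) (C : Fin (n + 2) → Finset L)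
    (hF : ∀ v : H.verts, F v = C (e v - c)) (v : H.verts) :
    (↑(C (e v - c - 1) ∪ C (e v - c) ∪ C (e v - c + 1)) : Set L) ⊆
      G.closedNbhdLabels F v := by
  have hprev : G.Adj v (e.symm (e v - 1)) := by
    have := H.adj_symm_apply_add_one e (e.symm (e v - 1))
    rw [e.apply_symm_apply, sub_add_cancel, e.symm_apply_apply] at this
    exact this.symm
  simp only [coe_union, Set.union_subset_iff]
  refine ⟨⟨?_, ?_⟩, ?_⟩
  · rw [sub_right_comm, ← e.apply_symm_apply (e v - 1), ← hF]
    exact coe_subset_closedNbhdLabels_of_adj hprev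
  · rw [← hF]
    exact coe_subset_closedNbhdLabels_self
  · rw [sub_add_eq_add_sub, ← e.apply_symm_apply (e v + 1), ← hF]
    exact coe_subset_closedNbhdLabels_of_adj (H.adj_symm_apply_add_one e v)

lemma coe_subset_closedNbhdLabels_of_iso_cycleGraph_of_eq {F : V → Finset L}
    (e : H.coe ≃g cycleGraph (n + 2)) (c : Fin (n + 2)) (C : Fin (n + 2) → Finset L)
    (hF : ∀ v : H.verts, F v = C (e v - c)) {v : H.verts} (hv : e v = c) :
    (↑(C (-1) ∪ C 0 ∪ C 1) : Set L) ⊆ G.closedNbhdLabels F v := by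
  simpa only [hv, sub_self, zero_sub, zero_add] using
    coe_subset_closedNbhdLabels_of_iso_cycleGraph e c C hF v

end SimpleGraph

abbrev DumbbellLabel := Option (ZMod 3 × Bool)

def handleLabel (r : ZMod 3) : Finset DumbbellLabel := {none, some (r, false), some (r, true)}

def plateLabel (r d : ZMod 3) : Fin 4 → Finset DumbbellLabel :=
  ![handleLabel r, {some (r - d, false), some (r - d, true), some (r, false)},
    handleLabel (r + d), {some (r - d, false), some (r - d, true), some (r, true)}]

lemma plateLabel_zero (r d : ZMod 3) : plateLabel r d 0 = handleLabel r := rfl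

lemma card_plateLabel_le (r d : ZMod 3) (m : Fin 4) : #(plateLabel r d m) ≤ 3 := by
  revert r d m; decide

lemma handleLabel_sub_one_union (r : ZMod 3) :
    handleLabel (r - 1) ∪ handleLabel r ∪ handleLabel (r + 1) = univ := by
  revert r; decide

lemma plateLabel_sub_one_union {r d : ZMod 3} (hd : d ≠ 0) {m : Fin 4} (hm : m ≠ 0) :
    plateLabel r d (m - 1) ∪ plateLabel r d m ∪ plateLabel r d (m + 1) = univ := by
  revert r d m; decide

lemma plateLabel_neg_one_union_handleLabel {r d : ZMod 3} (hd : d ≠ 0) :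
    plateLabel r d (-1) ∪ plateLabel r d 0 ∪ plateLabel r d 1 ∪ handleLabel (r + d) = univ := by
  revert r d; decide

lemma plateLabel_neg_one_union_plateLabel_neg {r d : ZMod 3} (hd : d ≠ 0) :
    plateLabel r d (-1) ∪ plateLabel r d 0 ∪ plateLabel r d 1 ∪
      (plateLabel r (-d) (-1) ∪ plateLabel r (-d) 0 ∪ plateLabel r (-d) 1) = univ := by
  revert r d; decide

section Dumbbell

variable {V : Type*} {G : SimpleGraph V} {x y : V}

structure IsDumbbellHandle (H₁ H₂ : G.Subgraph) (P : G.Walk x y) : Prop where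
  inter_subsingleton : (H₁.verts ∩ H₂.verts).Subsingleton
  isPath : P.IsPath
  sup_eq_top : H₁ ⊔ H₂ ⊔ P.toSubgraph = ⊤
  inter_support_left : H₁.verts ∩ {v | v ∈ P.support} = {x}
  inter_support_right : H₂.verts ∩ {v | v ∈ P.support} = {y}
  disjoint_of_ne : x ≠ y → Disjoint H₁.verts H₂.verts

lemma IsDumbbell.exists_isDumbbellHandle {H₁ H₂ : G.Subgraph} (hd : IsDumbbell G H₁ H₂) :
    ∃ (x y : V) (P : G.Walk x y), IsDumbbellHandle H₁ H₂ P := by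
  obtain ⟨hsub, x, y, P, hP, -, hsup, hx, hy, hdisj⟩ := hd
  exact ⟨x, y, P, hsub, hP, hsup, hx, hy, hdisj⟩

namespace IsDumbbellHandle

variable {H₁ H₂ : G.Subgraph} {P : G.Walk x y} {v : V}

lemma left_mem (hD : IsDumbbellHandle H₁ H₂ P) : x ∈ H₁.verts :=
  (hD.inter_support_left.symm ▸ Set.mem_singleton x : x ∈ H₁.verts ∩ _).1

lemma right_mem (hD : IsDumbbellHandle H₁ H₂ P) : y ∈ H₂.verts :=
  (hD.inter_support_right.symm ▸ Set.mem_singleton y : y ∈ H₂.verts ∩ _).1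

lemma eq_left_of_mem_support (hD : IsDumbbellHandle H₁ H₂ P) (hv : v ∈ H₁.verts)
    (hvP : v ∈ P.support) : v = x :=
  hD.inter_support_left.subset ⟨hv, hvP⟩

lemma eq_right_of_mem_support (hD : IsDumbbellHandle H₁ H₂ P) (hv : v ∈ H₂.verts)
    (hvP : v ∈ P.support) : v = y :=
  hD.inter_support_right.subset ⟨hv, hvP⟩

lemma eq_of_mem_inter (hD : IsDumbbellHandle H₁ H₂ P) (hv₁ : v ∈ H₁.verts)
    (hv₂ : v ∈ H₂.verts) : v = x ∧ y = x := by
  by_cases hxy : x = y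
  · subst hxy
    exact ⟨hD.inter_subsingleton ⟨hv₁, hv₂⟩ ⟨hD.left_mem, hD.right_mem⟩, rfl⟩
  · exact absurd (hD.disjoint_of_ne hxy) (Set.not_disjoint_iff.mpr ⟨v, hv₁, hv₂⟩)

lemma length_eq_zero_of_mem_inter (hD : IsDumbbellHandle H₁ H₂ P) (hv₁ : v ∈ H₁.verts)
    (hv₂ : v ∈ H₂.verts) : P.length = 0 := by
  obtain ⟨-, rfl⟩ := hD.eq_of_mem_inter hv₁ hv₂
  exact Walk.length_eq_zero_iff.mpr (Walk.isPath_iff_nil.mp hD.isPath)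

lemma mem_verts (hD : IsDumbbellHandle H₁ H₂ P) (v : V) :
    v ∈ H₁.verts ∨ v ∈ H₂.verts ∨ v ∈ P.support := by
  have hv : v ∈ (H₁ ⊔ H₂ ⊔ P.toSubgraph).verts := hD.sup_eq_top ▸ Set.mem_univ v
  simpa [or_assoc] using hv

variable [DecidableEq V]

noncomputable def label (hD : IsDumbbellHandle H₁ H₂ P) (e₁ : H₁.coe ≃g cycleGraph 4)
    (e₂ : H₂.coe ≃g cycleGraph 4) (v : V) : Finset DumbbellLabel :=
  open Classical in
  if hv₁ : v ∈ H₁.verts then plateLabel 0 1 (e₁ ⟨v, hv₁⟩ - e₁ ⟨x, hD.left_mem⟩)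
  else if hv₂ : v ∈ H₂.verts then
    plateLabel P.length (-1) (e₂ ⟨v, hv₂⟩ - e₂ ⟨y, hD.right_mem⟩)
  else handleLabel (P.support.idxOf v)

variable (e₁ : H₁.coe ≃g cycleGraph 4) (e₂ : H₂.coe ≃g cycleGraph 4)

lemma label_of_mem_left (hD : IsDumbbellHandle H₁ H₂ P) (hv : v ∈ H₁.verts) :
    hD.label e₁ e₂ v = plateLabel 0 1 (e₁ ⟨v, hv⟩ - e₁ ⟨x, hD.left_mem⟩) :=
  dif_pos hv

lemma label_of_mem_right (hD : IsDumbbellHandle H₁ H₂ P) (hv : v ∈ H₂.verts) :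
    hD.label e₁ e₂ v = plateLabel P.length (-1) (e₂ ⟨v, hv⟩ - e₂ ⟨y, hD.right_mem⟩) := by
  by_cases hv₁ : v ∈ H₁.verts
  · have hn := hD.length_eq_zero_of_mem_inter hv₁ hv
    obtain ⟨rfl, rfl⟩ := hD.eq_of_mem_inter hv₁ hv
    rw [hD.label_of_mem_left e₁ e₂ hv₁, hn]
    simp [plateLabel_zero]
  · rw [label, dif_neg hv₁, dif_pos hv]

lemma label_getVert (hD : IsDumbbellHandle H₁ H₂ P) {j : ℕ} (hj : j ≤ P.length) :
    hD.label e₁ e₂ (P.getVert j) = handleLabel j := by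
  unfold label
  split_ifs with h₁ h₂
  · have hx := hD.eq_left_of_mem_support h₁ (P.getVert_mem_support j)
    obtain rfl := (hD.isPath.getVert_eq_start_iff hj).mp hx
    rw [congrArg e₁ (Subtype.ext hx : (⟨_, h₁⟩ : H₁.verts) = ⟨x, hD.left_mem⟩), sub_self,
      Nat.cast_zero, plateLabel_zero]
  · have hy := hD.eq_right_of_mem_support h₂ (P.getVert_mem_support j)
    obtain rfl := (hD.isPath.getVert_eq_end_iff hj).mp hy
    rw [congrArg e₂ (Subtype.ext hy : (⟨_, h₂⟩ : H₂.verts) = ⟨y, hD.right_mem⟩), sub_self,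
      plateLabel_zero]
  · rw [hD.isPath.idxOf_getVert hj]

lemma card_label_le (hD : IsDumbbellHandle H₁ H₂ P) (v : V) : #(hD.label e₁ e₂ v) ≤ 3 := by
  unfold label
  split_ifs
  · exact card_plateLabel_le ..
  · exact card_plateLabel_le ..
  · exact card_plateLabel_le _ 0 0

lemma closedNbhdLabels_label_of_mem_left (hD : IsDumbbellHandle H₁ H₂ P)
    (hv : v ∈ H₁.verts) (hvx : v ≠ x) : G.closedNbhdLabels (hD.label e₁ e₂) v = Set.univ := by
  have hm : e₁ ⟨v, hv⟩ - e₁ ⟨x, hD.left_mem⟩ ≠ 0 :=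
    sub_ne_zero.mpr (e₁.injective.ne (Subtype.coe_ne_coe.mp hvx))
  have := coe_subset_closedNbhdLabels_of_iso_cycleGraph e₁ _ _
    (fun w => hD.label_of_mem_left e₁ e₂ w.2) ⟨v, hv⟩
  rw [plateLabel_sub_one_union (by decide) hm, coe_univ] at this
  exact Set.eq_univ_of_univ_subset this

lemma closedNbhdLabels_label_of_mem_right (hD : IsDumbbellHandle H₁ H₂ P)
    (hv : v ∈ H₂.verts) (hvy : v ≠ y) : G.closedNbhdLabels (hD.label e₁ e₂) v = Set.univ := by
  have hm : e₂ ⟨v, hv⟩ - e₂ ⟨y, hD.right_mem⟩ ≠ 0 :=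
    sub_ne_zero.mpr (e₂.injective.ne (Subtype.coe_ne_coe.mp hvy))
  have := coe_subset_closedNbhdLabels_of_iso_cycleGraph e₂ _ _
    (fun w => hD.label_of_mem_right e₁ e₂ w.2) ⟨v, hv⟩
  rw [plateLabel_sub_one_union (by decide) hm, coe_univ] at this
  exact Set.eq_univ_of_univ_subset this

lemma closedNbhdLabels_label_left (hD : IsDumbbellHandle H₁ H₂ P) :
    G.closedNbhdLabels (hD.label e₁ e₂) x = Set.univ := by
  have hleft := coe_subset_closedNbhdLabels_of_iso_cycleGraph_of_eq e₁ _ _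
    (fun w => hD.label_of_mem_left e₁ e₂ w.2) (v := ⟨x, hD.left_mem⟩) rfl
  refine Set.eq_univ_of_univ_subset ?_
  rcases Nat.eq_zero_or_pos P.length with hn | hn
  · obtain rfl : x = y := P.eq_of_length_eq_zero hn
    have hright := coe_subset_closedNbhdLabels_of_iso_cycleGraph_of_eq e₂ _ _
      (fun w => hD.label_of_mem_right e₁ e₂ w.2) (v := ⟨x, hD.right_mem⟩) rfl
    rw [hn, Nat.cast_zero] at hright
    rw [← coe_univ, ← plateLabel_neg_one_union_plateLabel_neg (r := 0) (d := 1) (by decide),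
      coe_union]
    exact Set.union_subset hleft hright
  · have hnext := coe_subset_closedNbhdLabels_of_adj (F := hD.label e₁ e₂)
      (by simpa using P.adj_getVert_succ hn)
    rw [hD.label_getVert e₁ e₂ hn, Nat.cast_one] at hnext
    rw [← coe_univ, ← plateLabel_neg_one_union_handleLabel (r := 0) (d := 1) (by decide),
      zero_add, coe_union]
    exact Set.union_subset hleft hnext

lemma closedNbhdLabels_label_right (hD : IsDumbbellHandle H₁ H₂ P) (hn : 0 < P.length) :
    G.closedNbhdLabels (hD.label e₁ e₂) y = Set.univ := by
  have hright := coe_subset_closedNbhdLabels_of_iso_cycleGraph_of_eq e₂ _ _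
    (fun w => hD.label_of_mem_right e₁ e₂ w.2) (v := ⟨y, hD.right_mem⟩) rfl
  have hadj := P.adj_getVert_succ (i := P.length - 1) (by omega)
  rw [Nat.sub_add_cancel hn, P.getVert_length] at hadj
  have hprev := coe_subset_closedNbhdLabels_of_adj (F := hD.label e₁ e₂) hadj.symm
  rw [hD.label_getVert e₁ e₂ (Nat.sub_le _ 1), Nat.cast_pred hn, sub_eq_add_neg] at hprev
  refine Set.eq_univ_of_univ_subset ?_
  rw [← coe_univ, ← plateLabel_neg_one_union_handleLabel (r := P.length) (d := -1) (by decide),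
    coe_union]
  exact Set.union_subset hright hprev

lemma closedNbhdLabels_label_getVert (hD : IsDumbbellHandle H₁ H₂ P) {j : ℕ} (hj : 0 < j)
    (hjn : j < P.length) : G.closedNbhdLabels (hD.label e₁ e₂) (P.getVert j) = Set.univ := by
  have hprev : G.Adj (P.getVert j) (P.getVert (j - 1)) := by
    simpa [Nat.sub_add_cancel hj] using (P.adj_getVert_succ (by omega : j - 1 < P.length)).symm
  refine Set.eq_univ_of_univ_subset ?_
  rw [← coe_univ, ← handleLabel_sub_one_union j, coe_union, coe_union]
  refine Set.union_subset (Set.union_subset ?_ ?_) ?_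
  · rw [← Nat.cast_pred hj, ← hD.label_getVert e₁ e₂ (by omega)]
    exact coe_subset_closedNbhdLabels_of_adj hprev
  · rw [← hD.label_getVert e₁ e₂ hjn.le]
    exact coe_subset_closedNbhdLabels_self
  · rw [← Nat.cast_succ, ← hD.label_getVert e₁ e₂ hjn]
    exact coe_subset_closedNbhdLabels_of_adj (P.adj_getVert_succ hjn)

lemma closedNbhdLabels_label (hD : IsDumbbellHandle H₁ H₂ P) (v : V) :
    G.closedNbhdLabels (hD.label e₁ e₂) v = Set.univ := by
  rcases hD.mem_verts v with hv | hv | hv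
  · by_cases hvx : v = x
    · rw [hvx]
      exact hD.closedNbhdLabels_label_left e₁ e₂
    · exact hD.closedNbhdLabels_label_of_mem_left e₁ e₂ hv hvx
  · by_cases hvy : v = y
    · rw [hvy]
      rcases Nat.eq_zero_or_pos P.length with hn | hn
      · obtain rfl : x = y := P.eq_of_length_eq_zero hn
        exact hD.closedNbhdLabels_label_left e₁ e₂
      · exact hD.closedNbhdLabels_label_right e₁ e₂ hn
    · exact hD.closedNbhdLabels_label_of_mem_right e₁ e₂ hv hvy
  · obtain ⟨j, rfl, hj⟩ := Walk.mem_support_iff_exists_getVert.mp hv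
    rcases Nat.eq_zero_or_pos j with rfl | hj0
    · rw [Walk.getVert_zero]
      exact hD.closedNbhdLabels_label_left e₁ e₂
    rcases hj.lt_or_eq with hjn | rfl
    · exact hD.closedNbhdLabels_label_getVert e₁ e₂ hj0 hjn
    · rw [Walk.getVert_length]
      exact hD.closedNbhdLabels_label_right e₁ e₂ hj0

end IsDumbbellHandle

end Dumbbell

/-- A `(C₄,C₄)`-dumbbell admits a `(7,3)`-configuration. -/
theorem stmt_10 {V : Type*} [Fintype V] [DecidableEq V] (G : SimpleGraph V)
    (H₁ H₂ : G.Subgraph) (hd : IsDumbbell G H₁ H₂)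
    (h1 : Nonempty (H₁.coe ≃g cycleGraph 4))
    (h2 : Nonempty (H₂.coe ≃g cycleGraph 4)) :
    ∃ 𝒟 : Multiset (Finset V), IsConfig G 𝒟 7 3 := by
  obtain ⟨x, y, P, hD⟩ := hd.exists_isDumbbellHandle
  obtain ⟨e₁⟩ := h1
  obtain ⟨e₂⟩ := h2
  exact SimpleGraph.exists_isConfig_of_closedNbhdLabels_eq_univ (hD.card_label_le e₁ e₂)
    (hD.closedNbhdLabels_label e₁ e₂)
end

section
/- Let G be a (C₄, H)-dumbbell, i.e. an (H₁,H₂)-dumbbell whose plate H₁ is isomorphic to the 4-cycle and whose other plate is H. If H admits a (2k+1, k)-configuration for some k ≥ 3, then G admits a (2k+1, k)-configuration. -/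
open SimpleGraph

/-!
Write the plate as the 4-cycle `x a b c` with `x = p 0`, where `p 0, …, p m` is the handle
and `p m` lies in the other plate `H`. Cut the handle into its residue classes
`Sᵣ = pathClass p m r` mod 3: every handle vertex except `p m` is dominated by each `Sᵣ`,
except `p 0` by `S₂`. The `2k + 1` sets `{a} ∪ S₀`, `{c} ∪ S₀`, `k` copies of `{b} ∪ S₁` and
`k - 1` copies of `{a, c} ∪ S₂` therefore dominate the plate and the handle, and each vertex
lies in at most `k` of them. Pairing them with the sets of a configuration of `H`, the sets
containing `p m` on either side first, the unions form a configuration of `G`: `p m` lies in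
at most `k` of them.
-/

namespace List

theorem countP_le_of_forall_mem_drop {α : Type*} {l : List α} {q : α → Bool} {k : ℕ}
    (h : ∀ x ∈ l.drop k, q x = false) : l.countP q ≤ k := by
  rw [← take_append_drop k l, countP_append, (countP_eq_zero (l := l.drop k)).2 (by simpa using h)]
  exact countP_le_length.trans (by simp)

end List

namespace Multiset

variable {α β : Type*}

theorem countP_or_le (q r : α → Prop) [DecidablePred q] [DecidablePred r] (s : Multiset α) :
    s.countP (fun x => q x ∨ r x) ≤ s.countP q + s.countP r := by
  induction s using Multiset.induction_on with
  | empty => simp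
  | cons x s ih => simp only [countP_cons]; split_ifs <;> grind

theorem countP_replicate (q : α → Prop) [DecidablePred q] (n : ℕ) (a : α) :
    (replicate n a).countP q = if q a then n else 0 := by
  rw [← coe_replicate, coe_countP, List.countP_replicate]
  simp

theorem countP_cons_cons_add_replicate_le (q : α → Prop) [DecidablePred q] {t₁ t₂ t₃ t₄ : α}
    {k : ℕ} (hk : 2 ≤ k) (h₃ : q t₃ → ¬ q t₁ ∧ ¬ q t₂ ∧ ¬ q t₄) (h : ¬ (q t₁ ∧ q t₂ ∧ q t₄)) :
    (t₁ ::ₘ t₂ ::ₘ (replicate k t₃ + replicate (k - 1) t₄)).countP q ≤ k := by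
  simp only [countP_cons, countP_add, countP_replicate]
  split_ifs <;> simp_all <;> omega

theorem exists_coe_eq_forall_mem_drop (s : Multiset α) (q : α → Prop) [DecidablePred q] {k : ℕ}
    (hk : s.countP q ≤ k) : ∃ l : List α, (l : Multiset α) = s ∧ ∀ x ∈ l.drop k, ¬ q x := by
  refine ⟨(s.filter q).toList ++ (s.filter (¬ q ·)).toList, ?_, fun x hx => ?_⟩
  · rw [← coe_add, coe_toList, coe_toList, filter_add_not]
  · rw [List.drop_append, List.drop_eq_nil_of_le (by simpa [← countP_eq_card_filter] using hk),
      List.nil_append] at hx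
    exact (by simpa using List.mem_of_mem_drop hx : x ∈ s ∧ ¬ q x).2

theorem exists_map_fst_eq_map_snd_eq (s : Multiset α) (t : Multiset β) (hst : card s = card t)
    (q : α → Prop) (r : β → Prop) [DecidablePred q] [DecidablePred r] {k : ℕ}
    (hs : s.countP q ≤ k) (ht : t.countP r ≤ k) :
    ∃ u : Multiset (α × β), u.map Prod.fst = s ∧ u.map Prod.snd = t ∧
      u.countP (fun x => q x.1 ∨ r x.2) ≤ k := by
  obtain ⟨l₁, rfl, hl₁⟩ := s.exists_coe_eq_forall_mem_drop q hs
  obtain ⟨l₂, rfl, hl₂⟩ := t.exists_coe_eq_forall_mem_drop r ht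
  simp only [coe_card] at hst
  refine ⟨l₁.zip l₂, by simp [List.map_fst_zip hst.le], by simp [List.map_snd_zip hst.ge], ?_⟩
  rw [coe_countP]
  refine List.countP_le_of_forall_mem_drop fun x hx => ?_
  rw [List.zip_eq_zipWith, List.drop_zipWith, ← List.zip_eq_zipWith] at hx
  have hx' := List.of_mem_zip hx
  simpa using ⟨hl₁ _ hx'.1, hl₂ _ hx'.2⟩

end Multiset

section Domination

variable {V : Type*} (G : SimpleGraph V)

def Dominates (D : Finset V) (v : V) : Prop := v ∈ D ∨ ∃ u ∈ D, G.Adj v u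

variable {G}

theorem Dominates.mono {D D' : Finset V} {v : V} (h : Dominates G D v) (hD : D ⊆ D') :
    Dominates G D' v :=
  h.imp (fun h => hD h) fun ⟨u, hu, huv⟩ => ⟨u, hD hu, huv⟩

theorem dominating_iff_forall_dominates {D : Finset V} :
    Dominating G D ↔ ∀ v, Dominates G D v :=
  forall_congr' fun _ => or_iff_not_imp_left.symm

variable [DecidableEq V] {n k : ℕ}

theorem IsConfig.exists_map_subtype {H : G.Subgraph} {𝒟 : Multiset (Finset H.verts)}
    (h : IsConfig H.coe 𝒟 n k) :
    ∃ 𝒟' : Multiset (Finset V), Multiset.card 𝒟' = n ∧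
      (∀ D ∈ 𝒟', ↑D ⊆ H.verts ∧ ∀ v ∈ H.verts, Dominates G D v) ∧
      ∀ v, 𝒟'.countP (v ∈ ·) ≤ k := by
  obtain ⟨hcard, hdom, hcount⟩ := h
  refine ⟨𝒟.map (Finset.map (Function.Embedding.subtype _)), by simpa using hcard, ?_,
    fun v => ?_⟩
  · simp only [Multiset.mem_map, forall_exists_index, and_imp]
    rintro _ D hD rfl
    refine ⟨by simp, fun v hv => ?_⟩
    rcases dominating_iff_forall_dominates.1 (hdom D hD) ⟨v, hv⟩ with hvD | ⟨u, hu, huv⟩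
    · exact Or.inl ((Finset.mem_map' _).2 hvD)
    · exact Or.inr ⟨u, (Finset.mem_map' _).2 hu, huv.adj_sub⟩
  · rw [Multiset.countP_map, ← Multiset.countP_eq_card_filter]
    by_cases hv : v ∈ H.verts
    · have hmem (D : Finset H.verts) : v ∈ D.map (Function.Embedding.subtype _) ↔ ⟨v, hv⟩ ∈ D :=
        Finset.mem_map' (Function.Embedding.subtype _) (a := ⟨v, hv⟩)
      simpa only [hmem] using hcount ⟨v, hv⟩
    · refine (Multiset.countP_eq_zero.2 fun D _ hvD => hv ?_).trans_le (Nat.zero_le k)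
      obtain ⟨u, -, rfl⟩ := Finset.mem_map.1 hvD
      exact u.2

theorem exists_isConfig_of_union (y : V) (𝒯 𝒟 : Multiset (Finset V))
    (h𝒯 : Multiset.card 𝒯 = n) (h𝒟 : Multiset.card 𝒟 = n)
    (hdom : ∀ v, (∀ T ∈ 𝒯, Dominates G T v) ∨ ∀ D ∈ 𝒟, Dominates G D v)
    (hy𝒯 : 𝒯.countP (y ∈ ·) ≤ k) (hy𝒟 : 𝒟.countP (y ∈ ·) ≤ k)
    (hcount : ∀ v ≠ y, 𝒯.countP (v ∈ ·) + 𝒟.countP (v ∈ ·) ≤ k) :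
    ∃ 𝒟' : Multiset (Finset V), IsConfig G 𝒟' n k := by
  obtain ⟨P, rfl, rfl, hy⟩ :=
    Multiset.exists_map_fst_eq_map_snd_eq 𝒯 𝒟 (h𝒯.trans h𝒟.symm) _ _ hy𝒯 hy𝒟
  have hcount_map (v : V) (f : Finset V × Finset V → Finset V) :
      (P.map f).countP (v ∈ ·) = P.countP (fun x => v ∈ f x) := by
    rw [Multiset.countP_map, Multiset.countP_eq_card_filter]
  refine ⟨P.map fun x => x.1 ∪ x.2, by simpa using h𝒯, ?_, fun v => ?_⟩
  · simp only [Multiset.mem_map, Prod.exists, forall_exists_index, and_imp]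
    rintro _ T D hTD rfl
    refine dominating_iff_forall_dominates.2 fun v => ?_
    rcases hdom v with h | h
    · exact (h T (Multiset.mem_map_of_mem _ hTD)).mono Finset.subset_union_left
    · exact (h D (Multiset.mem_map_of_mem _ hTD)).mono Finset.subset_union_right
  · simp only [hcount_map, Finset.mem_union] at hcount ⊢
    by_cases hv : v = y
    · exact hv ▸ hy
    · exact (Multiset.countP_or_le _ _ P).trans (hcount v hv)

end Domination

section Handle

variable {V : Type*} {G : SimpleGraph V}

def c4HandleVerts (a b c : V) (p : ℕ → V) (m : ℕ) : Set V := {a, b, c} ∪ p '' {j | j ≤ m}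

structure IsC4WithHandle (G : SimpleGraph V) (a b c : V) (p : ℕ → V) (m : ℕ) : Prop where
  adj_start_a : G.Adj (p 0) a
  adj_ab : G.Adj a b
  adj_bc : G.Adj b c
  adj_c_start : G.Adj c (p 0)
  adj_succ : ∀ j < m, G.Adj (p j) (p (j + 1))
  ne_ac : a ≠ c
  injOn : Set.InjOn p {j | j ≤ m}
  disjoint : Disjoint ({a, b, c} : Set V) (p '' {j | j ≤ m})

variable [DecidableEq V] {a b c : V} {p : ℕ → V} {m k : ℕ}

def pathClass (p : ℕ → V) (m r : ℕ) : Finset V :=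
  ((Finset.range (m + 1)).filter (· % 3 = r)).image p

theorem mem_pathClass {r : ℕ} {v : V} :
    v ∈ pathClass p m r ↔ ∃ j ≤ m, j % 3 = r ∧ p j = v := by
  simp [pathClass, and_assoc]

theorem dominates_pathClass (hadj : ∀ j < m, G.Adj (p j) (p (j + 1))) {j r : ℕ} (hj : j < m)
    (hr : r < 3) (hjr : r < 2 ∨ 0 < j) : Dominates G (pathClass p m r) (p j) := by
  rcases (by omega : j % 3 = r ∨ (j + 1) % 3 = r ∨ 0 < j ∧ (j - 1) % 3 = r)
    with h | h | ⟨hj0, h⟩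
  · exact Or.inl (mem_pathClass.2 ⟨j, hj.le, h, rfl⟩)
  · exact Or.inr ⟨p (j + 1), mem_pathClass.2 ⟨j + 1, hj, h, rfl⟩, hadj j hj⟩
  · obtain ⟨i, rfl⟩ : ∃ i, j = i + 1 := ⟨j - 1, by omega⟩
    exact Or.inr ⟨p i, mem_pathClass.2 ⟨i, by omega, h, rfl⟩, (hadj i (by omega)).symm⟩

def handleFamily (a b c : V) (p : ℕ → V) (m k : ℕ) : Multiset (Finset V) :=
  insert a (pathClass p m 0) ::ₘ insert c (pathClass p m 0) ::ₘ
    (Multiset.replicate k (insert b (pathClass p m 1)) +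
      Multiset.replicate (k - 1) (insert a (insert c (pathClass p m 2))))

theorem card_handleFamily (hk : 1 ≤ k) :
    Multiset.card (handleFamily a b c p m k) = 2 * k + 1 := by
  simp only [handleFamily, Multiset.card_cons, Multiset.card_add, Multiset.card_replicate]
  omega

theorem subset_of_mem_handleFamily {T : Finset V} (hT : T ∈ handleFamily a b c p m k) :
    ↑T ⊆ c4HandleVerts a b c p m := by
  have hS (r : ℕ) : ↑(pathClass p m r) ⊆ p '' {j | j ≤ m} := fun v hv => by
    obtain ⟨j, hj, -, rfl⟩ := mem_pathClass.1 hv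
    exact ⟨j, hj, rfl⟩
  simp only [handleFamily, Multiset.mem_cons, Multiset.mem_add, Multiset.mem_replicate] at hT
  rcases hT with rfl | rfl | ⟨-, rfl⟩ | ⟨-, rfl⟩ <;> intro v hv <;>
    simp only [Finset.coe_insert, Set.mem_insert_iff, Finset.mem_coe] at hv <;>
    grind [c4HandleVerts]

namespace IsC4WithHandle

theorem dominates_handleFamily (h : IsC4WithHandle G a b c p m) {T : Finset V}
    (hT : T ∈ handleFamily a b c p m k) {v : V}
    (hv : v ∈ ({a, b, c} : Set V) ∪ p '' {j | j < m}) : Dominates G T v := by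
  have hp0 : p 0 ∈ pathClass p m 0 := mem_pathClass.2 ⟨0, Nat.zero_le _, rfl, rfl⟩
  have mem {x : V} {s : Finset V} : Dominates G (insert x s) x :=
    Or.inl (Finset.mem_insert_self x s)
  have adj {x y : V} {s : Finset V} (hxy : G.Adj y x) : Dominates G (insert x s) y :=
    Or.inr ⟨x, Finset.mem_insert_self x s, hxy⟩
  have path {x : V} {r j : ℕ} (hj : j < m) (hr : r < 3) (hjr : r < 2 ∨ 0 < j) :
      Dominates G (insert x (pathClass p m r)) (p j) :=
    (dominates_pathClass h.adj_succ hj hr hjr).mono (Finset.subset_insert _ _)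
  simp only [handleFamily, Multiset.mem_cons, Multiset.mem_add, Multiset.mem_replicate] at hT
  rcases hT with rfl | rfl | ⟨-, rfl⟩ | ⟨-, rfl⟩ <;>
    rcases hv with (rfl | rfl | rfl) | ⟨j, hj, rfl⟩
  · exact mem
  · exact adj h.adj_ab.symm
  · exact Or.inr ⟨p 0, Finset.mem_insert_of_mem hp0, h.adj_c_start⟩
  · exact path hj (by omega) (by omega)
  · exact Or.inr ⟨p 0, Finset.mem_insert_of_mem hp0, h.adj_start_a.symm⟩
  · exact adj h.adj_bc
  · exact mem
  · exact path hj (by omega) (by omega)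
  · exact adj h.adj_ab
  · exact mem
  · exact adj h.adj_bc.symm
  · exact path hj (by omega) (by omega)
  · exact mem
  · exact adj h.adj_ab.symm
  · exact (mem (s := pathClass p m 2)).mono (Finset.subset_insert _ _)
  · rcases Nat.eq_zero_or_pos j with rfl | hj0
    · exact adj h.adj_start_a
    · exact (path hj (by omega) (Or.inr hj0)).mono (Finset.subset_insert _ _)

theorem pathClass_eq_of_mem (h : IsC4WithHandle G a b c p m) {v : V} {r r' : ℕ}
    (hr : v ∈ pathClass p m r) (hr' : v ∈ pathClass p m r') : r = r' := by
  obtain ⟨i, hi, rfl, rfl⟩ := mem_pathClass.1 hr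
  obtain ⟨j, hj, rfl, hji⟩ := mem_pathClass.1 hr'
  rw [h.injOn hj hi hji]

theorem ne_of_mem_pathClass (h : IsC4WithHandle G a b c p m) {v : V} {r : ℕ}
    (hv : v ∈ pathClass p m r) : v ≠ a ∧ v ≠ b ∧ v ≠ c := by
  obtain ⟨j, hj, -, rfl⟩ := mem_pathClass.1 hv
  simpa [not_or] using Set.disjoint_right.1 h.disjoint ⟨j, hj, rfl⟩

theorem countP_handleFamily_le (h : IsC4WithHandle G a b c p m) (hk : 2 ≤ k) (v : V) :
    (handleFamily a b c p m k).countP (v ∈ ·) ≤ k := by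
  have hab := h.adj_ab.ne
  have hbc := h.adj_bc.ne
  have hac := h.ne_ac
  have hS {r : ℕ} := h.ne_of_mem_pathClass (v := v) (r := r)
  have hclass {r r' : ℕ} := h.pathClass_eq_of_mem (v := v) (r := r) (r' := r')
  refine Multiset.countP_cons_cons_add_replicate_le _ hk ?_ ?_ <;>
    simp only [Finset.mem_insert] <;> grind

theorem exists_isConfig (h : IsC4WithHandle G a b c p m) (H : G.Subgraph)
    (hcover : H.verts ∪ c4HandleVerts a b c p m = Set.univ)
    (hmeet : H.verts ∩ c4HandleVerts a b c p m = {p m}) (hk : 2 ≤ k)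
    (hH : ∃ 𝒟 : Multiset (Finset H.verts), IsConfig H.coe 𝒟 (2 * k + 1) k) :
    ∃ 𝒟' : Multiset (Finset V), IsConfig G 𝒟' (2 * k + 1) k := by
  obtain ⟨𝒟₀, h𝒟₀⟩ := hH
  obtain ⟨𝒟, hcard, hdom, hcount⟩ := h𝒟₀.exists_map_subtype
  have hpm : p m ∈ H.verts ∩ c4HandleVerts a b c p m := hmeet ▸ rfl
  refine exists_isConfig_of_union (p m) (handleFamily a b c p m k) 𝒟
    (card_handleFamily (by omega)) hcard (fun v => ?_) (h.countP_handleFamily_le hk _)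
    (hcount _) (fun v hv => ?_)
  · by_cases hvH : v ∈ H.verts
    · exact Or.inr fun D hD => (hdom D hD).2 v hvH
    · refine Or.inl fun T hT => h.dominates_handleFamily hT ?_
      refine (((Set.mem_union _ _ _).1 (hcover ▸ Set.mem_univ v)).resolve_left hvH).imp id ?_
      rintro ⟨j, hj, rfl⟩
      refine ⟨j, show j < m from lt_of_le_of_ne hj ?_, rfl⟩
      rintro rfl
      exact hvH hpm.1
  · by_cases hvH : v ∈ H.verts
    · have h𝒯 : (handleFamily a b c p m k).countP (v ∈ ·) = 0 :=
        Multiset.countP_eq_zero.2 fun T hT hvT =>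
          hv (hmeet ▸ ⟨hvH, subset_of_mem_handleFamily hT hvT⟩ : v ∈ ({p m} : Set V))
      rw [h𝒯, zero_add]
      exact hcount v
    · have h𝒟 : 𝒟.countP (v ∈ ·) = 0 :=
        Multiset.countP_eq_zero.2 fun D hD hvD => hvH ((hdom D hD).1 hvD)
      rw [h𝒟, add_zero]
      exact h.countP_handleFamily_le hk v

end IsC4WithHandle

end Handle

theorem SimpleGraph.Subgraph.exists_of_iso_cycleGraph_four {V : Type*} {G : SimpleGraph V}
    {H : G.Subgraph} (e : H.coe ≃g cycleGraph 4) {x : V} (hx : x ∈ H.verts) :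
    ∃ a b c : V, G.Adj x a ∧ G.Adj a b ∧ G.Adj b c ∧ G.Adj c x ∧ a ≠ c ∧ x ≠ b ∧
      H.verts = {x, a, b, c} := by
  set i := e ⟨x, hx⟩
  set f : Fin 4 → V := fun j => e.symm (i + j)
  have hf0 : f 0 = x := by simp [f, i]
  have hadj (j : Fin 4) : G.Adj (f j) (f (j + 1)) :=
    (e.symm.map_adj_iff.2 (cycleGraph_adj.2 (Or.inr (by abel)))).adj_sub
  have hinj : Function.Injective f :=
    Subtype.val_injective.comp (e.symm.injective.comp (add_right_injective i))
  have hsurj (w : V) (hw : w ∈ H.verts) : ∃ j, f j = w :=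
    ⟨e ⟨w, hw⟩ - i, by simp [f]⟩
  refine ⟨f 1, f 2, f 3, hf0 ▸ hadj 0, hadj 1, hadj 2, hf0 ▸ hadj 3,
    hinj.ne (by decide), hf0 ▸ hinj.ne (by decide), Set.ext fun w => ⟨fun hw => ?_, ?_⟩⟩
  · obtain ⟨j, rfl⟩ := hsurj w hw
    fin_cases j <;> simp [← hf0]
  · rintro (rfl | rfl | rfl | rfl) <;> first | exact hx | exact (e.symm _).2

theorem IsDumbbell.exists_isC4WithHandle {V : Type*} {G : SimpleGraph V} {H₁ H₂ : G.Subgraph}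
    (hd : IsDumbbell G H₁ H₂) (e : H₁.coe ≃g cycleGraph 4) :
    ∃ (a b c : V) (p : ℕ → V) (m : ℕ), IsC4WithHandle G a b c p m ∧
      H₂.verts ∪ c4HandleVerts a b c p m = Set.univ ∧
      H₂.verts ∩ c4HandleVerts a b c p m = {p m} := by
  obtain ⟨hsub, x, y, P, hP, -, htop, hI₁, hI₂, hdisj⟩ := hd
  have hsupp : {v | v ∈ P.support} = P.getVert '' {j | j ≤ P.length} := by
    ext v
    simp [Walk.mem_support_iff_exists_getVert, and_comm]
  have hx : x ∈ H₁.verts ∩ {v | v ∈ P.support} := hI₁ ▸ rfl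
  have hy : y ∈ H₂.verts ∩ {v | v ∈ P.support} := hI₂ ▸ rfl
  obtain ⟨a, b, c, hxa, hab, hbc, hcx, hac, hxb, hH₁⟩ :=
    H₁.exists_of_iso_cycleGraph_four e hx.1
  have hU : c4HandleVerts a b c P.getVert P.length = H₁.verts ∪ {v | v ∈ P.support} := by
    rw [c4HandleVerts, hH₁, ← hsupp, eq_comm, Set.insert_union,
      Set.insert_eq_of_mem (Set.mem_union_right _ hx.2)]
  have hplates : H₂.verts ∩ H₁.verts ⊆ {y} := by
    rintro w ⟨hw₂, hw₁⟩
    by_cases hxy : x = y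
    · exact hxy ▸ hsub ⟨hw₁, hw₂⟩ ⟨hx.1, hxy ▸ hy.1⟩
    · exact absurd hw₂ (Set.disjoint_left.1 (hdisj hxy) hw₁)
  refine ⟨a, b, c, P.getVert, P.length, ⟨by simpa using hxa, hab, hbc, by simpa using hcx,
    fun j hj => P.adj_getVert_succ hj, hac, hP.getVert_injOn, ?_⟩, ?_, ?_⟩
  · rw [← hsupp, Set.disjoint_left]
    intro v hv hvP
    have hvx : v ∈ ({x} : Set V) := hI₁ ▸ ⟨hH₁ ▸ Set.mem_insert_of_mem x hv, hvP⟩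
    rcases hv with rfl | rfl | rfl
    exacts [hxa.ne hvx.symm, hxb hvx.symm, hcx.ne hvx]
  · rw [hU, ← Subgraph.verts_top, ← htop]
    simp only [Subgraph.verts_sup, Walk.verts_toSubgraph]
    rw [Set.union_left_comm, Set.union_assoc]
  · rw [hU, P.getVert_length, Set.inter_union_distrib_left, hI₂, Set.union_eq_right.2 hplates]

theorem stmt_11_general {V : Type*} [DecidableEq V] (G : SimpleGraph V)
    (H₁ H₂ : G.Subgraph) (hd : IsDumbbell G H₁ H₂)
    (h1 : Nonempty (H₁.coe ≃g cycleGraph 4))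
    (k : ℕ) (hk : 3 ≤ k)
    (hH : ∃ 𝒟 : Multiset (Finset H₂.verts), IsConfig H₂.coe 𝒟 (2 * k + 1) k) :
    ∃ 𝒟' : Multiset (Finset V), IsConfig G 𝒟' (2 * k + 1) k := by
  obtain ⟨e⟩ := h1
  obtain ⟨a, b, c, p, m, h, hcover, hmeet⟩ := hd.exists_isC4WithHandle e
  exact h.exists_isConfig H₂ hcover hmeet (by omega) hH

/-- If `G` is a `(C₄, H)`-dumbbell and the plate `H` admits a `(2k+1, k)`-configuration
with `k ≥ 3`, then so does `G`. -/
theorem stmt_11 {V : Type*} [Fintype V] [DecidableEq V] (G : SimpleGraph V)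
    (H₁ H₂ : G.Subgraph) (hd : IsDumbbell G H₁ H₂)
    (h1 : Nonempty (H₁.coe ≃g cycleGraph 4))
    (k : ℕ) (hk : 3 ≤ k)
    (hH : ∃ 𝒟 : Multiset (Finset H₂.verts), IsConfig H₂.coe 𝒟 (2 * k + 1) k) :
    ∃ 𝒟' : Multiset (Finset V), IsConfig G 𝒟' (2 * k + 1) k :=
  stmt_11_general G H₁ H₂ hd h1 k hk hH
end

section
/- Let G be a 2-connected finite simple graph with n ≥ 4 vertices such that every cycle of G (not necessarily induced) has length exactly 4. Then G is isomorphic to the complete bipartite graph K_{2,n−2}. -/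
/-!
A 2-connected graph has no vertex of degree 1, so it is not a tree and contains a cycle, which must
be a square `a x b y`. If `w ∉ {x, b, y}` is a neighbour of `a`, take a path from `w` that avoids
`a` (`G - a` is connected) and stops at the first vertex of the square it meets; closing it through
either arc of the square back to `a` gives cycles, of length 4, which forces the path to be the
single edge `w b`. Propagating this along edges, every vertex is a common neighbour of `a, b` or of
`x, y`. If both families had a member off the square, the two would lie on a hexagon; so one of the
pairs is joined to every other vertex, and since `G` is triangle-free, `G ≅ K_{2,n-2}`.
-/

open SimpleGraph

namespace SimpleGraph

variable {V : Type*} {G : SimpleGraph V}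

lemma Connected.exists_walk_notMem_support {a u v : V} (h : (G.induce {t | t ≠ a}).Connected)
    (hu : u ≠ a) (hv : v ≠ a) : ∃ p : G.Walk u v, a ∉ p.support := by
  obtain ⟨p⟩ := h.preconnected ⟨u, hu⟩ ⟨v, hv⟩
  refine ⟨p.map (Embedding.induce _).toHom, fun h => ?_⟩
  obtain ⟨t, -, ht⟩ := List.mem_map.mp (Walk.support_map _ p ▸ h)
  exact t.2 ht

lemma Preconnected.mem_of_forall_adj_mem {N : Set V} (hG : G.Preconnected)
    (hN : ∀ u w, u ∈ N → G.Adj u w → w ∈ N) {a : V} (ha : a ∈ N) (v : V) : v ∈ N := by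
  obtain ⟨p⟩ := hG a v
  induction p with
  | nil => exact ha
  | cons h _ ih => exact ih (hN _ _ ha h)

namespace Walk

lemma exists_isPath_to_first_mem [DecidableEq V] {S : Set V} {u v : V}
    (p : G.Walk u v) (hv : v ∈ S) :
    ∃ z ∈ S, ∃ q : G.Walk u z, q.IsPath ∧ q.support ⊆ p.support ∧
      ∀ t ∈ q.support, t ∈ S → t = z := by
  suffices ∃ z ∈ S, ∃ q : G.Walk u z, q.support ⊆ p.support ∧ ∀ t ∈ q.support, t ∈ S → t = z by
    obtain ⟨z, hz, q, hsub, hfirst⟩ := this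
    exact ⟨z, hz, q.bypass, q.bypass_isPath, fun t ht => hsub (q.support_bypass_subset_support ht),
      fun t ht => hfirst t (q.support_bypass_subset_support ht)⟩
  induction p with
  | nil => exact ⟨_, hv, nil, by simp, by simp⟩
  | @cons u _ _ h p ih =>
    by_cases hu : u ∈ S
    · exact ⟨u, hu, nil, by simp, by simp⟩
    obtain ⟨z, hz, q, hsub, hfirst⟩ := ih hv
    refine ⟨z, hz, cons h q, by simpa using List.cons_subset_cons u hsub, ?_⟩
    rintro t (_ | ⟨_, ht⟩) htS
    · exact absurd htS hu
    · exact hfirst t ht htS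

lemma IsPath.length_add_one_eq_of_forall_isCycle {n : ℕ}
    (hcyc : ∀ (v : V) (c : G.Walk v v), c.IsCycle → c.length = n)
    {u v : V} {p : G.Walk u v} (hp : p.IsPath) (h : G.Adj v u) (hl : 1 < p.length) :
    p.length + 1 = n := by
  have hc : (cons h p).IsCycle := Path.cons_isCycle ⟨p, hp⟩ h fun he => by
    have := hp.length_eq_one_of_mem_edges (Sym2.eq_swap ▸ he)
    omega
  simpa using hcyc v _ hc

lemma IsCycle.exists_mem_commonNeighbors {u : V} {c : G.Walk u u} (hc : c.IsCycle)
    (h4 : c.length = 4) :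
    ∃ a b x y, a ≠ b ∧ x ≠ y ∧ a ∈ G.commonNeighbors x y ∧ b ∈ G.commonNeighbors x y := by
  have hadj (i : ℕ) (hi : i < 4) := c.adj_getVert_succ (i := i) (h4 ▸ hi)
  have hinj := hc.getVert_injOn'
  rw [h4] at hinj
  refine ⟨c.getVert 0, c.getVert 2, c.getVert 1, c.getVert 3, ?_, ?_, ?_, ?_⟩
  · exact fun h => absurd (hinj (by simp) (by simp) h) (by norm_num)
  · exact fun h => absurd (hinj (by simp) (by simp) h) (by norm_num)
  · rw [G.mem_commonNeighbors]
    refine ⟨(hadj 0 (by norm_num)).symm, ?_⟩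
    simpa [← h4] using hadj 3 (by norm_num)
  · exact G.mem_commonNeighbors.2 ⟨hadj 1 (by norm_num), (hadj 2 (by norm_num)).symm⟩

lemma IsPath.isCycle_cons_append {u w z : V} {q : G.Walk w z} {r : G.Walk z u}
    (hq : q.IsPath) (hr : r.IsPath) (huw : G.Adj u w) (hu : u ∉ q.support) (hwz : w ≠ z)
    (hqr : ∀ t ∈ q.support, t ∈ r.support → t = z) : ((cons huw q).append r).IsCycle := by
  refine (hq.cons hu).isCycle_append hr (fun t htq htr => ?_) (Or.inl ?_)
  · rw [support_cons, List.tail_cons] at htq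
    have hzr : z ∉ r.support.tail :=
      (List.nodup_cons.mp (r.cons_tail_support ▸ hr.support_nodup)).1
    exact hzr (hqr t htq (List.mem_of_mem_tail htr) ▸ htr)
  · simpa using not_nil_iff_lt_length.mp (q.not_nil_of_ne hwz)

end Walk

lemma cliqueFree_three_of_forall_isCycle {n : ℕ}
    (hcyc : ∀ (v : V) (c : G.Walk v v), c.IsCycle → c.length = n) (hn : n ≠ 3) :
    G.CliqueFree 3 := by
  intro s hs
  obtain ⟨u, c, hc, hl⟩ := is3Clique_iff_exists_cycle_length_three.mp ⟨s, hs⟩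
  exact hn (hl ▸ hcyc u c hc).symm

open Walk in
lemma adj_of_mem_commonNeighbors (hcyc : ∀ (v : V) (c : G.Walk v v), c.IsCycle → c.length = 4)
    {x y u v w : V} (hxy : x ≠ y) (hu : u ∈ G.commonNeighbors x y)
    (hv : v ∈ G.commonNeighbors x y) (hconn : (G.induce {t | t ≠ u}).Connected)
    (huw : G.Adj u w) (hwx : w ≠ x) (hwv : w ≠ v) (hwy : w ≠ y) : G.Adj v w := by
  classical
  obtain rfl | huv := eq_or_ne u v
  · exact huw
  rw [mem_commonNeighbors] at hu hv
  obtain ⟨p, hpu⟩ := hconn.exists_walk_notMem_support huw.ne' hu.1.ne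
  obtain ⟨z, hz, q, hq, hqp, hfirst⟩ :=
    p.exists_isPath_to_first_mem (S := {x, v, y}) (by simp)
  have hqu : u ∉ q.support := fun h => hpu (hqp h)
  have hwz : w ≠ z := by rintro rfl; simp [hwx, hwv, hwy] at hz
  -- closing `q` by an arc of the square from `z` back to `u` gives a cycle through `u w`
  have harc (r : G.Walk z u) (hr : r.IsPath) (hrS : ∀ t ∈ r.support, t ∈ ({x, v, y, u} : Set V)) :
      q.length + r.length = 3 := by
    have hc := hq.isCycle_cons_append hr huw hqu hwz fun t htq htr => hfirst t htq <| by
      have htu : t ≠ u := by rintro rfl; exact hqu htq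
      simpa [htu] using hrS t htr
    have := hcyc u _ hc
    simp only [length_append, length_cons] at this
    omega
  obtain rfl | rfl | rfl := hz
  · have h1 := harc (cons hu.1 nil) (by simp [hu.1.ne]) (by simp)
    have h3 := harc (cons hv.1 (cons hv.2.symm (cons hu.2 nil)))
      (by simp [hv.1.ne, hxy, hu.1.ne, hv.2.ne', huv.symm, hu.2.ne]) (by simp)
    simp only [length_cons, length_nil] at h1 h3
    omega
  · have h2 := harc (cons hv.2.symm (cons hu.2 nil)) (by simp [hv.2.ne', huv.symm, hu.2.ne])
      (by simp)
    exact (q.adj_of_length_eq_one (by simpa using h2)).symm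
  · have h1 := harc (cons hu.2 nil) (by simp [hu.2.ne]) (by simp)
    have h3 := harc (cons hv.2 (cons hv.1.symm (cons hu.1 nil)))
      (by simp [hv.2.ne, hxy.symm, hu.2.ne, hv.1.ne', huv.symm, hu.1.ne]) (by simp)
    simp only [length_cons, length_nil] at h1 h3
    omega

lemma mem_commonNeighbors_or_of_adj
    (hcyc : ∀ (v : V) (c : G.Walk v v), c.IsCycle → c.length = 4)
    (hne : ∀ t : V, (G.induce {s | s ≠ t}).Connected) {a b x y u w : V} (hxy : x ≠ y)
    (ha : a ∈ G.commonNeighbors x y) (hb : b ∈ G.commonNeighbors x y)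
    (hu : u ∈ G.commonNeighbors x y) (huw : G.Adj u w) :
    w ∈ G.commonNeighbors a b ∨ w ∈ G.commonNeighbors x y := by
  by_cases hwab : w = a ∨ w = b
  · obtain rfl | rfl := hwab
    exacts [Or.inr ha, Or.inr hb]
  by_cases hwxy : w = x ∨ w = y
  · rw [mem_commonNeighbors] at ha hb
    obtain rfl | rfl := hwxy
    exacts [Or.inl ⟨ha.1.symm, hb.1.symm⟩, Or.inl ⟨ha.2.symm, hb.2.symm⟩]
  push Not at hwab hwxy
  exact Or.inl ⟨adj_of_mem_commonNeighbors hcyc hxy hu ha (hne u) huw hwxy.1 hwab.1 hwxy.2,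
    adj_of_mem_commonNeighbors hcyc hxy hu hb (hne u) huw hwxy.1 hwab.2 hwxy.2⟩

open Walk in
lemma forall_mem_commonNeighbors_or {n : ℕ}
    (hcyc : ∀ (v : V) (c : G.Walk v v), c.IsCycle → c.length = n) (hn : n ≠ 6)
    {a b x y : V} (hab : a ≠ b) (hxy : x ≠ y)
    (ha : a ∈ G.commonNeighbors x y) (hb : b ∈ G.commonNeighbors x y)
    (hcover : ∀ t, t ∈ G.commonNeighbors a b ∨ t ∈ G.commonNeighbors x y) :
    (∀ t, t ≠ a → t ≠ b → t ∈ G.commonNeighbors a b) ∨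
      (∀ t, t ≠ x → t ≠ y → t ∈ G.commonNeighbors x y) := by
  by_contra! h
  obtain ⟨⟨t, hta, htb, ht⟩, s, hsx, hsy, hs⟩ := h
  have ht' := (hcover t).resolve_left ht
  have hs' := (hcover s).resolve_right hs
  have hst : s ≠ t := by rintro rfl; exact ht hs'
  rw [mem_commonNeighbors] at ha hb ht ht' hs hs'
  have htx : t ≠ x := by rintro rfl; exact ht ⟨ha.1.symm, hb.1.symm⟩
  have hty : t ≠ y := by rintro rfl; exact ht ⟨ha.2.symm, hb.2.symm⟩
  -- `a s b x t y` would be a hexagon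
  have hp : (cons hs'.1 (cons hs'.2.symm (cons hb.1.symm (cons ht'.1
      (cons ht'.2.symm nil))))).IsPath := by
    simp [hs'.1.ne, hab, ha.1.ne', hta.symm, ha.2.ne', hs'.2.ne', hsx, hst, hsy, hb.1.ne', htb.symm,
      hb.2.ne', htx.symm, hxy, hty]
  exact hn (by simpa using (hp.length_add_one_eq_of_forall_isCycle hcyc ha.2 (by simp)).symm)

lemma nonempty_iso_completeBipartiteGraph_of_adj_iff (p : V → Prop)
    (h : ∀ u v, G.Adj u v ↔ (p u ↔ ¬p v)) :
    Nonempty (completeBipartiteGraph {v // p v} {v // ¬p v} ≃g G) := by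
  classical
  exact ⟨{ toEquiv := Equiv.sumCompl p
           map_rel_iff' := by rintro (⟨u, hu⟩ | ⟨u, hu⟩) (⟨v, hv⟩ | ⟨v, hv⟩) <;> simp [h, hu, hv] }⟩

lemma nonempty_iso_completeBipartiteGraph_of_forall_mem_commonNeighbors [Fintype V]
    (h3 : G.CliqueFree 3) {a b : V} (hab : a ≠ b) (hnadj : ¬G.Adj a b)
    (hcn : ∀ t, t ≠ a → t ≠ b → t ∈ G.commonNeighbors a b) :
    Nonempty (G ≃g completeBipartiteGraph (Fin 2) (Fin (Fintype.card V - 2))) := by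
  classical
  have hadj (u v : V) : G.Adj u v ↔ ((u = a ∨ u = b) ↔ ¬(v = a ∨ v = b)) := by
    by_cases hu : u = a ∨ u = b <;> by_cases hv : v = a ∨ v = b <;>
      simp only [hu, hv, not_true, not_false_eq_true, iff_true, iff_false]
    · rcases hu with rfl | rfl <;> rcases hv with rfl | rfl
      exacts [G.irrefl, hnadj, fun h => hnadj h.symm, G.irrefl]
    · push Not at hv
      rcases hu with rfl | rfl
      exacts [(hcn v hv.1 hv.2).1, (hcn v hv.1 hv.2).2]
    · push Not at hu
      rcases hv with rfl | rfl
      exacts [(hcn u hu.1 hu.2).1.symm, (hcn u hu.1 hu.2).2.symm]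
    · push Not at hu hv
      intro huv
      exact isIndepSet_neighborSet_of_triangleFree G h3 a (hcn u hu.1 hu.2).1 (hcn v hv.1 hv.2).1
        huv.ne huv
  obtain ⟨e⟩ := nonempty_iso_completeBipartiteGraph_of_adj_iff _ hadj
  have h2 : Fintype.card {v // v = a ∨ v = b} = 2 := by
    rw [Fintype.card_subtype, ← Finset.card_pair hab]
    congr 1
    ext
    simp
  have hc : Fintype.card {v // ¬(v = a ∨ v = b)} = Fintype.card V - 2 := by
    rw [Fintype.card_subtype_compl, h2]
  exact ⟨e.symm.trans (completeBipartiteGraphCongr (Fintype.equivFinOfCardEq h2)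
    (Fintype.equivFinOfCardEq hc))⟩

end SimpleGraph

lemma TwoConnected.not_isAcyclic {V : Type*} [Fintype V] {G : SimpleGraph V}
    (h : TwoConnected G) : ¬G.IsAcyclic := by
  classical
  obtain ⟨hconn, hcard, hne⟩ := h
  intro hac
  have : Nontrivial V := Fintype.one_lt_card_iff_nontrivial.mp (by omega)
  obtain ⟨v, hv⟩ := IsTree.exists_vert_degree_one_of_nontrivial ⟨hconn, hac⟩
  obtain ⟨u, huv, hu⟩ := degree_eq_one_iff_existsUnique_adj.mp hv
  obtain ⟨t, -, ht⟩ := Finset.exists_mem_notMem_of_card_lt_card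
    (s := {u, v}) (t := Finset.univ) (by grind [Finset.card_le_two, Finset.card_univ])
  simp only [Finset.mem_insert, Finset.mem_singleton, not_or] at ht
  obtain ⟨p, hpu⟩ := (hne u).exists_walk_notMem_support huv.ne ht.1
  have hp : ¬p.Nil := Walk.not_nil_of_ne (Ne.symm ht.2)
  exact hpu (hu _ (p.adj_snd hp) ▸ p.getVert_mem_support 1)

theorem stmt_13_general {V : Type*} [Fintype V] (G : SimpleGraph V)
    (h2 : TwoConnected G)
    (hcyc : ∀ (v : V) (c : G.Walk v v), c.IsCycle → c.length = 4) :
    Nonempty (G ≃g completeBipartiteGraph (Fin 2) (Fin (Fintype.card V - 2))) := by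
  have h3 : G.CliqueFree 3 := cliqueFree_three_of_forall_isCycle hcyc (by norm_num)
  obtain ⟨v, c, hc⟩ : ∃ v, ∃ c : G.Walk v v, c.IsCycle := by
    simpa [IsAcyclic] using h2.not_isAcyclic
  obtain ⟨a, b, x, y, hab, hxy, ha, hb⟩ := hc.exists_mem_commonNeighbors (hcyc v c hc)
  have hx : x ∈ G.commonNeighbors a b := ⟨ha.1.symm, hb.1.symm⟩
  have hy : y ∈ G.commonNeighbors a b := ⟨ha.2.symm, hb.2.symm⟩
  have hcover : ∀ t, t ∈ G.commonNeighbors a b ∨ t ∈ G.commonNeighbors x y := by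
    refine h2.1.preconnected.mem_of_forall_adj_mem (N := {t | _}) ?_ (Or.inl hx)
    rintro u w (hu | hu) huw
    · exact (mem_commonNeighbors_or_of_adj hcyc h2.2.2 hab hx hy hu huw).symm
    · exact mem_commonNeighbors_or_of_adj hcyc h2.2.2 hxy ha hb hu huw
  obtain hstar | hstar := forall_mem_commonNeighbors_or hcyc (by norm_num) hab hxy ha hb hcover
  · exact nonempty_iso_completeBipartiteGraph_of_forall_mem_commonNeighbors h3 hab
      (isIndepSet_neighborSet_of_triangleFree G h3 x ha.1 hb.1 hab) hstar
  · exact nonempty_iso_completeBipartiteGraph_of_forall_mem_commonNeighbors h3 hxy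
      (isIndepSet_neighborSet_of_triangleFree G h3 a hx.1 hy.1 hxy) hstar

/-- A 2-connected graph on `n ≥ 4` vertices in which every (not necessarily induced)
cycle has length exactly 4 is isomorphic to the complete bipartite graph `K_{2,n-2}`. -/
theorem stmt_13 {V : Type*} [Fintype V] [DecidableEq V] (G : SimpleGraph V)
    (h2 : TwoConnected G) (hn : 4 ≤ Fintype.card V)
    (hcyc : ∀ (v : V) (c : G.Walk v v), c.IsCycle → c.length = 4) :
    Nonempty (G ≃g completeBipartiteGraph (Fin 2) (Fin (Fintype.card V - 2))) :=
  stmt_13_general G h2 hcyc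
end

section
/- For every integer p ≥ 2, the complete bipartite graph K_{2,p} admits a (3p−2, p)-configuration, and consequently its fractional domatic number is at least (3p−2)/p. -/
open SimpleGraph

lemma countP_replicate' {α : Type*} (n : ℕ) (a : α) (q : α → Prop) [DecidablePred q] :
    (Multiset.replicate n a).countP q = if q a then n else 0 := by
  induction n with
  | zero => simp
  | succ n ih => rw [Multiset.replicate_succ, Multiset.countP_cons]; split <;> simp_all

lemma countP_eq_single {α : Type*} [Fintype α] [DecidableEq α] (j : α) :
    Multiset.countP (fun a => a = j) Finset.univ.val = 1 := by
  have : Multiset.countP (fun a => a = j) Finset.univ.val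
      = Multiset.count j Finset.univ.val := by
    simp only [Multiset.count]
    exact Multiset.countP_congr rfl (by intro a _; simp [eq_comm])
  rw [this, Multiset.count_univ]

lemma card_le_sum_countP {V : Type*} [Fintype V] [DecidableEq V]
    (𝒟 : Multiset (Finset V)) (h : ∀ D ∈ 𝒟, D.Nonempty) :
    Multiset.card 𝒟 ≤ ∑ v : V, 𝒟.countP (fun D => v ∈ D) := by
  induction 𝒟 using Multiset.induction with
  | empty => simp
  | cons D 𝒟 ih =>
    simp only [Multiset.card_cons, Multiset.countP_cons]
    rw [Finset.sum_add_distrib]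
    have h1 : 1 ≤ ∑ v : V, if v ∈ D then 1 else 0 := by
      obtain ⟨x, hx⟩ := h D (Multiset.mem_cons_self _ _)
      calc 1 = ∑ v ∈ ({x} : Finset V), if v ∈ D then 1 else 0 := by simp [hx]
      _ ≤ _ := Finset.sum_le_sum_of_subset (Finset.subset_univ _)
    have h2 := ih (fun D' hD' => h D' (Multiset.mem_cons_of_mem hD'))
    omega

lemma config_k_bound {V : Type*} [Fintype V] [Nonempty V] [DecidableEq V]
    (G : SimpleGraph V) (𝒟 : Multiset (Finset V)) (k s : ℕ)
    (h : IsConfig G 𝒟 k s) : k ≤ Fintype.card V * s := by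
  obtain ⟨hcard, hdom, hcount⟩ := h
  have hne : ∀ D ∈ 𝒟, D.Nonempty := by
    intro D hD
    obtain ⟨v⟩ := ‹Nonempty V›
    by_cases hv : v ∈ D
    · exact ⟨v, hv⟩
    · obtain ⟨u, hu, _⟩ := hdom D hD v hv
      exact ⟨u, hu⟩
  calc k = Multiset.card 𝒟 := hcard.symm
  _ ≤ ∑ v : V, 𝒟.countP (fun D => v ∈ D) := card_le_sum_countP 𝒟 hne
  _ ≤ ∑ _v : V, s := Finset.sum_le_sum (fun v _ => hcount v)
  _ = Fintype.card V * s := by simp [Finset.sum_const, Finset.card_univ, mul_comm]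

/-- For every `p ≥ 2`, the complete bipartite graph `K_{2,p}` admits a
`(3p-2, p)`-configuration, and hence its fractional domatic number is at
least `(3p-2)/p`. -/
theorem stmt_14 (p : ℕ) (hp : 2 ≤ p) :
    (∃ 𝒟 : Multiset (Finset (Fin 2 ⊕ Fin p)),
      IsConfig (completeBipartiteGraph (Fin 2) (Fin p)) 𝒟 (3 * p - 2) p) ∧
    (3 * (p : ℝ) - 2) / (p : ℝ) ≤ fracDomatic (completeBipartiteGraph (Fin 2) (Fin p)) := by
  haveI : NeZero p := ⟨by omega⟩
  set G := completeBipartiteGraph (Fin 2) (Fin p) with hG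
  set R : Finset (Fin 2 ⊕ Fin p) := Finset.univ.image Sum.inr with hRdef
  set A : Fin p → Finset (Fin 2 ⊕ Fin p) := fun i => {Sum.inl 0, Sum.inr i} with hAdef
  set B : Fin p → Finset (Fin 2 ⊕ Fin p) := fun i => {Sum.inl 1, Sum.inr i} with hBdef
  set 𝒟 : Multiset (Finset (Fin 2 ⊕ Fin p)) :=
    Multiset.replicate (p - 2) R + Multiset.map A Finset.univ.val
      + Multiset.map B Finset.univ.val with h𝒟def
  have hconfig : IsConfig G 𝒟 (3 * p - 2) p := by
    refine ⟨?_, ?_, ?_⟩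
    · simp only [h𝒟def, Multiset.card_add, Multiset.card_replicate, Multiset.card_map]
      have : Multiset.card (Finset.univ.val : Multiset (Fin p)) = p := by
        rw [← Finset.card_def, Finset.card_univ, Fintype.card_fin]
      omega
    · intro D hD
      have hRdom : Dominating G R := by
        intro v hv
        match v with
        | Sum.inl a =>
          exact ⟨Sum.inr 0, by simp [hRdef], by simp [hG]⟩
        | Sum.inr j => exact absurd (by simp [hRdef]) hv
      have hABdom : ∀ (b : Fin 2) (i : Fin p),
          Dominating G ({Sum.inl b, Sum.inr i} : Finset (Fin 2 ⊕ Fin p)) := by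
        intro b i v hv
        match v with
        | Sum.inl a => exact ⟨Sum.inr i, by simp, by simp [hG]⟩
        | Sum.inr j => exact ⟨Sum.inl b, by simp, by simp [hG]⟩
      simp only [h𝒟def, Multiset.mem_add, Multiset.mem_map] at hD
      rcases hD with (hD | ⟨i, _, rfl⟩) | ⟨i, _, rfl⟩
      · rw [Multiset.eq_of_mem_replicate hD]; exact hRdom
      · exact hABdom 0 i
      · exact hABdom 1 i
    · intro v
      simp only [h𝒟def, Multiset.countP_add, Multiset.countP_map, ← Multiset.countP_eq_card_filter]
      rw [countP_replicate']
      have key : ∀ (b c : Fin 2), Multiset.countP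
          (fun i => (Sum.inl b : Fin 2 ⊕ Fin p) ∈ ({Sum.inl c, Sum.inr i} : Finset (Fin 2 ⊕ Fin p)))
          Finset.univ.val = if b = c then p else 0 := by
        intro b c
        by_cases hbc : b = c
        · subst hbc
          rw [if_pos rfl, Multiset.countP_congr rfl (p' := fun _ => True) (by intro i _; simp)]
          simp
        · rw [if_neg hbc, Multiset.countP_congr rfl (p' := fun _ => False)
            (by intro i _; simp [hbc])]
          simp
      have keyR : ∀ (c : Fin 2) (j : Fin p), Multiset.countP
          (fun i => (Sum.inr j : Fin 2 ⊕ Fin p) ∈ ({Sum.inl c, Sum.inr i} : Finset (Fin 2 ⊕ Fin p)))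
          Finset.univ.val = 1 := by
        intro c j
        rw [Multiset.countP_congr rfl (p' := fun i => i = j) (by intro i _; simp [eq_comm]),
          countP_eq_single]
      match v with
      | Sum.inl a =>
        have hnR : (Sum.inl a : Fin 2 ⊕ Fin p) ∉ R := by simp [hRdef]
        rw [if_neg hnR]
        simp only [hAdef, hBdef]
        rw [key a 0, key a 1]
        have : a = 0 ∨ a = 1 := by
          rcases a with ⟨(_|_|n), h⟩
          · exact Or.inl rfl
          · exact Or.inr rfl
          · omega
        rcases this with rfl | rfl <;> simp
      | Sum.inr j =>
        have hR : (Sum.inr j : Fin 2 ⊕ Fin p) ∈ R := by simp [hRdef]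
        rw [if_pos hR]
        simp only [hAdef, hBdef]
        rw [keyR 0 j, keyR 1 j]
        omega
  refine ⟨⟨𝒟, hconfig⟩, ?_⟩
  have hmem : ((3 * p - 2 : ℕ) : ℝ) / (p : ℝ) ∈ {x : ℝ | ∃ k s : ℕ, 0 < s ∧
      (∃ 𝒟 : Multiset (Finset (Fin 2 ⊕ Fin p)), IsConfig G 𝒟 k s) ∧
      x = (k : ℝ) / (s : ℝ)} :=
    ⟨3 * p - 2, p, by omega, ⟨𝒟, hconfig⟩, rfl⟩
  have hbdd : BddAbove {x : ℝ | ∃ k s : ℕ, 0 < s ∧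
      (∃ 𝒟 : Multiset (Finset (Fin 2 ⊕ Fin p)), IsConfig G 𝒟 k s) ∧
      x = (k : ℝ) / (s : ℝ)} := by
    refine ⟨(Fintype.card (Fin 2 ⊕ Fin p) : ℝ), ?_⟩
    rintro x ⟨k, s, hs, ⟨𝒞, h𝒞⟩, rfl⟩
    have hk : k ≤ Fintype.card (Fin 2 ⊕ Fin p) * s := config_k_bound G 𝒞 k s h𝒞
    rw [div_le_iff₀ (by exact_mod_cast hs)]
    exact_mod_cast hk
  have := le_csSup hbdd hmem
  have hcast : ((3 * p - 2 : ℕ) : ℝ) = 3 * (p : ℝ) - 2 := by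
    have : 2 ≤ 3 * p := by omega
    push_cast [Nat.cast_sub this]
    ring
  rw [hcast] at this
  exact this
end

section
/- Let G be a finite simple graph, let S be a dominating set of G, and let 𝒟 be a (2k+1, k)-configuration of G. Then the multiset consisting of S together with two copies of every element of 𝒟 is a (2r+1, r)-configuration of G, where r = 2k+1. -/
open SimpleGraph

/-- If `S` is a dominating set of `G` and `𝒟` is a `(2k+1, k)`-configuration of `G`,
then `S` together with two copies of every element of `𝒟` forms a
`(2r+1, r)`-configuration of `G`, where `r = 2k+1`. -/
theorem stmt_15 {V : Type*} [Fintype V] [DecidableEq V] (G : SimpleGraph V)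
    (S : Finset V) (hS : Dominating G S) (k : ℕ) (𝒟 : Multiset (Finset V))
    (h : IsConfig G 𝒟 (2 * k + 1) k) :
    IsConfig G (S ::ₘ (𝒟 + 𝒟)) (2 * (2 * k + 1) + 1) (2 * k + 1) := by
  obtain ⟨hcard, hdom, hcount⟩ := h
  refine ⟨by simp [hcard]; ring, ?_, ?_⟩
  · intro D hD
    simp only [Multiset.mem_cons, Multiset.mem_add] at hD
    rcases hD with rfl | hD | hD
    · exact hS
    · exact hdom D hD
    · exact hdom D hD
  · intro v
    rw [Multiset.countP_cons, Multiset.countP_add]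
    have := hcount v
    split <;> omega
end
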